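/- arXiv:0708.1905 — 9 statements merged into one kernel-verified Lean document; each statement's English description precedes it below -/
import Mathlib

section
/- For every real number H with 0 < H < 1, the integral ∫_0^∞ ((1+u)^(H−1/2) − u^(H−1/2))² du is finite, i.e. the function u ↦ ((1+u)^(H−1/2) − u^(H−1/2))² is integrable on (0,∞). -/
open MeasureTheory

lemma key_bound {a u : ℝ} (ha : a ≤ 1) (hu : 1 ≤ u) :
    |(1 + u) ^ a - u ^ a| ≤ |a| * u ^ (a - 1) := by
  have hu0 : (0:ℝ) < u := lt_of_lt_of_le one_pos hu
  have h1 : u < 1 + u := by linarith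
  obtain ⟨c, hc, hceq⟩ := exists_hasDerivAt_eq_slope (fun x => x ^ a)
    (fun x => a * x ^ (a - 1)) h1
    (fun x hx => by
      have hx0 : (0:ℝ) < x := lt_of_lt_of_le hu0 hx.1
      exact (Real.continuousAt_rpow_const x a (Or.inl hx0.ne')).continuousWithinAt)
    (fun x hx => Real.hasDerivAt_rpow_const (Or.inl (lt_of_lt_of_le hu0 hx.1.le).ne'))
  have hc0 : 0 < c := lt_trans hu0 hc.1
  have hceq' : (1 + u) ^ a - u ^ a = a * c ^ (a - 1) := by
    rw [hceq]; ring_nf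
  rw [hceq', abs_mul]
  have hcpos : 0 < c ^ (a - 1) := Real.rpow_pos_of_pos hc0 _
  have : c ^ (a - 1) ≤ u ^ (a - 1) :=
    Real.rpow_le_rpow_of_nonpos hu0 hc.1.le (by linarith)
  calc |a| * |c ^ (a - 1)| = |a| * c ^ (a - 1) := by rw [abs_of_pos hcpos]
    _ ≤ |a| * u ^ (a - 1) := by
        exact mul_le_mul_of_nonneg_left this (abs_nonneg a)

/-- For every real `H` with `0 < H < 1`, the function
`u ↦ ((1+u)^(H-1/2) - u^(H-1/2))^2` is integrable on `(0, ∞)`. -/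
theorem mvn_kernel_square_integrable (H : ℝ) (hH0 : 0 < H) (hH1 : H < 1) :
    IntegrableOn
      (fun u : ℝ => ((1 + u) ^ (H - 1/2) - u ^ (H - 1/2)) ^ 2)
      (Set.Ioi (0 : ℝ)) := by
  obtain ⟨a, ha_def⟩ : ∃ a : ℝ, a = H - 1/2 := ⟨_, rfl⟩
  rw [← ha_def]
  have ha1 : -(1/2 : ℝ) < a := by rw [ha_def]; linarith
  have ha2 : a < 1/2 := by rw [ha_def]; linarith
  have hmeas : Measurable (fun u : ℝ => ((1 + u) ^ a - u ^ a) ^ 2) := by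
    fun_prop
  rw [show Set.Ioi (0:ℝ) = Set.Ioc 0 1 ∪ Set.Ioi 1 from
      (Set.Ioc_union_Ioi_eq_Ioi zero_le_one).symm]
  apply IntegrableOn.union
  · -- (0,1]
    have hg : IntegrableOn (fun u : ℝ => 8 + 2 * u ^ (2 * a)) (Set.Ioc 0 1) := by
      apply Integrable.add (integrableOn_const measure_Ioc_lt_top.ne)
      refine Integrable.const_mul ?_ 2
      have := intervalIntegral.intervalIntegrable_rpow' (a := 0) (b := 1) (r := 2*a)
        (by linarith)
      rwa [intervalIntegrable_iff_integrableOn_Ioc_of_le zero_le_one] at this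
    refine hg.mono' hmeas.aestronglyMeasurable ?_
    filter_upwards [ae_restrict_mem measurableSet_Ioc] with u hu
    obtain ⟨hu0, hu1⟩ := hu
    have h1u : (0:ℝ) < 1 + u := by linarith
    have hb : (1 + u) ^ a ≤ 2 := by
      rcases le_or_gt 0 a with h | h
      · calc (1 + u) ^ a ≤ (2:ℝ) ^ a :=
              Real.rpow_le_rpow h1u.le (by linarith) h
          _ ≤ (2:ℝ) ^ (1:ℝ) :=
              Real.rpow_le_rpow_of_exponent_le one_le_two (by linarith)
          _ = 2 := Real.rpow_one 2
      · calc (1 + u) ^ a ≤ 1 :=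
              Real.rpow_le_one_of_one_le_of_nonpos (by linarith) h.le
          _ ≤ 2 := one_le_two
    have hb0 : (0:ℝ) ≤ (1 + u) ^ a := (Real.rpow_pos_of_pos h1u a).le
    have hsq : (u ^ a) ^ 2 = u ^ (2 * a) := by
      rw [← Real.rpow_natCast (u ^ a) 2, ← Real.rpow_mul hu0.le]
      norm_num; ring_nf
    have hgpos : (0:ℝ) ≤ u ^ (2 * a) := (Real.rpow_pos_of_pos hu0 _).le
    rw [Real.norm_eq_abs, abs_of_nonneg (sq_nonneg _), ← hsq]
    nlinarith [sq_nonneg ((1 + u) ^ a + u ^ a), Real.rpow_pos_of_pos hu0 a]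
  · -- (1,∞)
    have hg : IntegrableOn (fun u : ℝ => a ^ 2 * u ^ (2 * a - 2)) (Set.Ioi 1) :=
      (integrableOn_Ioi_rpow_of_lt (by linarith) one_pos).const_mul _
    refine hg.mono' hmeas.aestronglyMeasurable ?_
    filter_upwards [ae_restrict_mem measurableSet_Ioi] with u hu
    have hu1 : (1:ℝ) ≤ u := le_of_lt hu
    have hu0 : (0:ℝ) < u := lt_of_lt_of_le one_pos hu1
    have h := key_bound (a := a) (by linarith) hu1
    rw [Real.norm_eq_abs, abs_of_nonneg (sq_nonneg _)]
    have hsq : (u ^ (a - 1)) ^ 2 = u ^ (2 * a - 2) := by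
      rw [← Real.rpow_natCast (u ^ (a-1)) 2, ← Real.rpow_mul hu0.le]
      norm_num; ring_nf
    calc ((1 + u) ^ a - u ^ a) ^ 2 = |(1 + u) ^ a - u ^ a| ^ 2 := (sq_abs _).symm
      _ ≤ (|a| * u ^ (a - 1)) ^ 2 := by
          exact pow_le_pow_left₀ (abs_nonneg _) h 2
      _ = a ^ 2 * u ^ (2 * a - 2) := by
          rw [mul_pow, sq_abs, hsq]
end

section
/- For every real number H with 0 < H < 1, ∫_0^∞ ((1+u)^(H−1/2) − u^(H−1/2))² du + 1/(2H) = Γ(H+1/2)² / (Γ(2H+1)·sin(πH)). Equivalently, the Mandelbrot–Van Ness scaling constant c_H = (∫_0^∞ ((1+u)^(H−1/2) − u^(H−1/2))² du + 1/(2H))^(−1/2) equals √(Γ(2H+1)·sin(πH)) / Γ(H+1/2). -/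
open MeasureTheory Real Set Filter

/-- Bernoulli for exponent in [-1,0], s ≥ 0. -/
lemma bern_neg {s p : ℝ} (hs : 0 ≤ s) (hp1 : -1 ≤ p) (hp2 : p ≤ 0) :
    1 + p * s ≤ (1 + s) ^ p := by
  have h1 : (1 + s) ^ (-p) ≤ 1 + (-p) * s :=
    rpow_one_add_le_one_add_mul_self (by linarith) (by linarith) (by linarith)
  have h2 : (0:ℝ) < (1 + s) ^ (-p) := Real.rpow_pos_of_pos (by linarith) _
  have h2' : (0:ℝ) < (1 + s) ^ p := Real.rpow_pos_of_pos (by linarith) _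
  have h3 : (1 + s) ^ p * (1 + s) ^ (-p) = 1 := by
    rw [← Real.rpow_add (by linarith)]; simp
  nlinarith [sq_nonneg (p * s), mul_le_mul_of_nonneg_left h1 h2'.le]

lemma rpow_one_add_eq {c u : ℝ} (hu : 0 < u) : (1+u) ^ c = u ^ c * (1+1/u) ^ c := by
  rw [← Real.mul_rpow hu.le (by positivity)]
  congr 1
  field_simp
  ring

lemma M1_lower {c u : ℝ} (hc1 : -1 ≤ c) (hc2 : c ≤ 0) (hu : 0 < u) :
    u ^ c + c * u ^ (c-1) ≤ (1+u) ^ c := by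
  have hb := bern_neg (s := 1/u) (by positivity) hc1 hc2
  have h1 : (0:ℝ) < u ^ c := Real.rpow_pos_of_pos hu _
  have h2 : u ^ c * (1 + c * (1/u)) ≤ u ^ c * (1+1/u) ^ c :=
    mul_le_mul_of_nonneg_left hb h1.le
  rw [← rpow_one_add_eq hu] at h2
  have h3 : u ^ (c-1) = u ^ c / u := Real.rpow_sub_one (ne_of_gt hu) c
  calc u ^ c + c * u ^ (c-1) = u ^ c * (1 + c * (1/u)) := by rw [h3]; field_simp
    _ ≤ _ := h2

lemma M1_upper {c u : ℝ} (hc2 : c ≤ 0) (hu : 0 < u) : (1+u) ^ c ≤ u ^ c :=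
  Real.rpow_le_rpow_of_nonpos hu (by linarith) hc2

lemma M2_lower {c u : ℝ} (hc1 : 0 ≤ c) (hu : 0 < u) : u ^ c ≤ (1+u) ^ c :=
  Real.rpow_le_rpow hu.le (by linarith) hc1

lemma M2_upper {c u : ℝ} (hc1 : 0 ≤ c) (hc2 : c ≤ 1) (hu : 0 < u) :
    (1+u) ^ c ≤ u ^ c + c * u ^ (c-1) := by
  have hb := rpow_one_add_le_one_add_mul_self (s := 1/u) (le_trans (by norm_num : (-1:ℝ) ≤ 0) (by positivity)) hc1 hc2
  have h1 : (0:ℝ) < u ^ c := Real.rpow_pos_of_pos hu _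
  have h2 : u ^ c * (1+1/u) ^ c ≤ u ^ c * (1 + c * (1/u)) :=
    mul_le_mul_of_nonneg_left hb h1.le
  rw [← rpow_one_add_eq hu] at h2
  have h3 : u ^ (c-1) = u ^ c / u := Real.rpow_sub_one (ne_of_gt hu) c
  calc (1+u) ^ c ≤ u ^ c * (1 + c * (1/u)) := h2
    _ = u ^ c + c * u ^ (c-1) := by rw [h3]; field_simp

/-- Integrability on `Ioi 0` from power bounds near `0` and at `∞`. -/
lemma integrableOn_Ioi_of_bounds {g : ℝ → ℝ} (hg : ContinuousOn g (Ioi 0))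
    {r1 r2 c1 c2 : ℝ} (hr1 : -1 < r1) (hr2 : r2 < -1)
    (h1 : ∀ u ∈ Ioc (0:ℝ) 1, |g u| ≤ c1 * u ^ r1)
    (h2 : ∀ u ∈ Ioi (1:ℝ), |g u| ≤ c2 * u ^ r2) :
    IntegrableOn g (Ioi (0:ℝ)) := by
  have hmeas : AEStronglyMeasurable g (volume.restrict (Ioi (0:ℝ))) :=
    hg.aestronglyMeasurable measurableSet_Ioi
  rw [← Set.Ioc_union_Ioi_eq_Ioi (zero_le_one (α := ℝ))]
  apply MeasureTheory.IntegrableOn.union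
  · have hint : IntegrableOn (fun u : ℝ => c1 * u ^ r1) (Ioc 0 1) := by
      have : IntegrableOn (fun u : ℝ => u ^ r1) (Ioo (0:ℝ) 1) :=
        (intervalIntegral.integrableOn_Ioo_rpow_iff one_pos).2 hr1
      exact ((this.congr_set_ae Ioo_ae_eq_Ioc.symm).const_mul c1)
    refine hint.integrable.mono' (hmeas.mono_measure ?_) ?_
    · exact Measure.restrict_mono Ioc_subset_Ioi_self le_rfl
    · exact (ae_restrict_iff' measurableSet_Ioc).2 (ae_of_all _ fun u hu => by
        simpa [Real.norm_eq_abs] using h1 u hu)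
  · have hint : IntegrableOn (fun u : ℝ => c2 * u ^ r2) (Ioi 1) :=
      (integrableOn_Ioi_rpow_of_lt hr2 one_pos).const_mul c2
    refine hint.integrable.mono' (hmeas.mono_measure ?_) ?_
    · exact Measure.restrict_mono (Ioi_subset_Ioi zero_le_one) le_rfl
    · exact (ae_restrict_iff' measurableSet_Ioi).2 (ae_of_all _ fun u hu => by
        simpa [Real.norm_eq_abs] using h2 u hu)

lemma contOn_pow1 (c : ℝ) : ContinuousOn (fun u : ℝ => u ^ c) (Ioi 0) :=
  continuousOn_id.rpow_const fun x hx => Or.inl (ne_of_gt hx)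

lemma contOn_pow2 (c : ℝ) : ContinuousOn (fun u : ℝ => (1 + u) ^ c) (Ioi 0) :=
  (continuous_const.add continuous_id).continuousOn.rpow_const
    fun x hx => Or.inl (by have : (0:ℝ) < x := hx; show (1:ℝ) + x ≠ 0; positivity)

lemma real_beta_Ioo {p q : ℝ} (hp : 0 < p) (hq : 0 < q) :
    ∫ x in Ioo (0:ℝ) 1, x ^ (p-1) * (1-x) ^ (q-1)
      = Real.Gamma p * Real.Gamma q / Real.Gamma (p+q) := by
  have hc := Complex.Gamma_mul_Gamma_eq_betaIntegral
    (s := (p:ℂ)) (t := (q:ℂ)) (by simpa using hp) (by simpa using hq)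
  have hbeta : Complex.betaIntegral (p:ℂ) (q:ℂ)
      = ((∫ x in (0:ℝ)..1, x ^ (p-1) * (1-x) ^ (q-1) : ℝ) : ℂ) := by
    rw [Complex.betaIntegral, ← intervalIntegral.integral_ofReal]
    refine intervalIntegral.integral_congr fun x hx => ?_
    rw [Set.uIcc_of_le zero_le_one] at hx
    push_cast
    rw [Complex.ofReal_cpow hx.1, Complex.ofReal_cpow (by linarith [hx.2] : 0 ≤ 1 - x)]
    push_cast
    ring
  rw [hbeta, show ((p:ℂ) + q) = ((p + q : ℝ) : ℂ) by push_cast; ring,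
    Complex.Gamma_ofReal, Complex.Gamma_ofReal, Complex.Gamma_ofReal,
    ← Complex.ofReal_mul, ← Complex.ofReal_mul] at hc
  have hr : Real.Gamma p * Real.Gamma q
      = Real.Gamma (p+q) * ∫ x in (0:ℝ)..1, x ^ (p-1) * (1-x) ^ (q-1) := by
    exact_mod_cast hc
  have hG : Real.Gamma (p+q) ≠ 0 := (Real.Gamma_pos_of_pos (by linarith)).ne'
  rw [intervalIntegral.integral_of_le zero_le_one,
    MeasureTheory.integral_Ioc_eq_integral_Ioo] at hr
  field_simp [hr]
  linear_combination -hr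

lemma real_beta_Ioi {p q : ℝ} (hp : 0 < p) (hq : 0 < q) :
    ∫ u in Ioi (0:ℝ), u ^ (p-1) * (1+u) ^ (-(p+q))
      = Real.Gamma p * Real.Gamma q / Real.Gamma (p+q) := by
  have himg : (fun x : ℝ => x / (1-x)) '' Ioo 0 1 = Ioi 0 := by
    ext y
    constructor
    · rintro ⟨x, hx, rfl⟩
      have h1 : 0 < 1 - x := by linarith [hx.2]
      exact div_pos hx.1 h1
    · intro hy
      have hy' : (0:ℝ) < y := hy
      refine ⟨y / (1+y), ⟨by positivity, ?_⟩, ?_⟩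
      · rw [div_lt_one (by linarith)]; linarith
      · field_simp; ring
  have hderiv : ∀ x ∈ Ioo (0:ℝ) 1, HasDerivWithinAt (fun x : ℝ => x / (1-x))
      (1 / (1-x)^2) (Ioo (0:ℝ) 1) x := by
    intro x hx
    have h1 : (1:ℝ) - x ≠ 0 := by have := hx.2; intro h; simp only [sub_eq_zero] at h; linarith
    have := (hasDerivAt_id x).div ((hasDerivAt_const x (1:ℝ)).sub (hasDerivAt_id x)) h1
    refine (this.congr_deriv ?_).hasDerivWithinAt
    simp only [Pi.sub_apply, id_eq]
    field_simp
    ring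
  have hinj : InjOn (fun x : ℝ => x / (1-x)) (Ioo 0 1) := by
    intro x hx y hy h
    have h1 : (1:ℝ) - x ≠ 0 := by have := hx.2; intro hh; simp only [sub_eq_zero] at hh; linarith
    have h2 : (1:ℝ) - y ≠ 0 := by have := hy.2; intro hh; simp only [sub_eq_zero] at hh; linarith
    field_simp at h
    linarith
  have hsub := MeasureTheory.integral_image_eq_integral_abs_deriv_smul measurableSet_Ioo
    hderiv hinj (fun u => u ^ (p-1) * (1+u) ^ (-(p+q)))
  rw [himg] at hsub
  rw [hsub, ← real_beta_Ioo hp hq]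
  refine setIntegral_congr_fun measurableSet_Ioo fun x hx => ?_
  have hx0 : 0 < x := hx.1
  have h1x : 0 < 1 - x := by linarith [hx.2]
  have e1 : 1 + x / (1-x) = (1-x)⁻¹ := by field_simp; ring
  have e2 : (x / (1-x)) ^ (p-1) = x ^ (p-1) * ((1-x) ^ (p-1))⁻¹ := by
    rw [Real.div_rpow hx0.le h1x.le, div_eq_mul_inv]
  have e3 : ((1-x)⁻¹) ^ (-(p+q)) = (1-x) ^ (p+q) := by
    rw [Real.inv_rpow h1x.le, Real.rpow_neg h1x.le, inv_inv]
  have e4 : |1 / (1-x)^2| = ((1-x) ^ ((2:ℕ):ℝ))⁻¹ := by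
    rw [abs_of_pos (by positivity), Real.rpow_natCast, one_div]
  simp only [smul_eq_mul, e1, e2, e3, e4]
  rw [← Real.rpow_neg h1x.le, ← Real.rpow_neg h1x.le]
  have e5 : (1-x) ^ (q-1) = (1-x) ^ (-((2:ℕ):ℝ)) * ((1-x) ^ (-(p-1)) * (1-x) ^ (p+q)) := by
    rw [← Real.rpow_add h1x, ← Real.rpow_add h1x]
    congr 1
    push_cast
    ring
  rw [e5]
  ring

lemma hasDerivAt_pow1 {u : ℝ} (hu : 0 < u) (c : ℝ) :
    HasDerivAt (fun x : ℝ => x ^ c) (c * u ^ (c-1)) u :=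
  Real.hasDerivAt_rpow_const (Or.inl hu.ne')

lemma hasDerivAt_pow2 {u : ℝ} (hu : 0 < u) (c : ℝ) :
    HasDerivAt (fun x : ℝ => (1+x) ^ c) (c * (1+u) ^ (c-1)) u := by
  have h := HasDerivAt.rpow_const (f := fun x : ℝ => 1 + x) (x := u) (p := c)
    ((hasDerivAt_id u).const_add 1) (Or.inl (by positivity))
  simpa using h

lemma mul_pow1 {u : ℝ} (hu : 0 < u) (c : ℝ) : u ^ c = u * u ^ (c-1) := by
  rw [Real.rpow_sub_one hu.ne' c]
  field_simp

lemma mul_pow2 {u : ℝ} (hu : 0 < u) (c : ℝ) : (1+u) ^ c = (1+u) * (1+u) ^ (c-1) := by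
  rw [Real.rpow_sub_one (by positivity : (1:ℝ)+u ≠ 0) c]
  field_simp

/-- derivative identity for the main antiderivative, case `a < 0` (no `u^(2a)` subtraction). -/
lemma hasDerivAt_G {a u : ℝ} (hu : 0 < u) :
    HasDerivAt (fun x : ℝ => x * ((1+x) ^ a - x ^ a) ^ 2 + (1+x) ^ (2*a))
      ((1+2*a) * ((1+u) ^ a - u ^ a) ^ 2 + 2*a * (u ^ a * (1+u) ^ (a-1))) u := by
  have h3 := (hasDerivAt_pow2 hu a).sub (hasDerivAt_pow1 hu a)
  have h5 := (hasDerivAt_id u).mul (h3.pow 2)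
  have h6 := hasDerivAt_pow2 hu (2*a)
  have h := h5.add h6
  refine h.congr_deriv ?_
  have hpos : (0:ℝ) < 1 + u := by positivity
  have eC : (1+u) ^ (2*a-1) = (1+u) ^ (a-1) * (1+u) ^ (a-1) * (1+u) := by
    rw [show (2*a - 1) = (a-1) + ((a-1) + 1) by ring, Real.rpow_add hpos,
      Real.rpow_add hpos, Real.rpow_one]
    ring
  simp only [id_eq, Pi.sub_apply, Pi.mul_apply, Pi.pow_apply, Pi.add_apply, Nat.cast_ofNat]
  rw [mul_pow1 hu a, mul_pow2 hu a, eC]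
  ring

lemma rpow_sq {u : ℝ} (hu : 0 < u) (c : ℝ) : (u ^ c) ^ 2 = u ^ (2*c) := by
  rw [sq, ← Real.rpow_add hu]
  congr 1
  ring

lemma f_sq_bound {a u : ℝ} (ha1 : -1 ≤ a) (ha2 : a ≤ 1) (hu : 0 < u) :
    ((1+u) ^ a - u ^ a) ^ 2 ≤ a ^ 2 * u ^ (2*a-2) := by
  have hY : (0:ℝ) ≤ u ^ (a-1) := Real.rpow_nonneg hu.le _
  have key : ((1+u) ^ a - u ^ a) ^ 2 ≤ (a * u ^ (a-1)) ^ 2 := by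
    rcases le_or_gt a 0 with h | h
    · have l := M1_lower ha1 h hu
      have r := M1_upper h hu
      have h1 : a * u ^ (a-1) ≤ (1+u) ^ a - u ^ a := by linarith
      have h2 : (1+u) ^ a - u ^ a ≤ 0 := by linarith
      nlinarith [mul_nonpos_of_nonneg_of_nonpos (sub_nonneg.2 h1)
        (by nlinarith [mul_nonpos_of_nonpos_of_nonneg h hY] : ((1+u) ^ a - u ^ a) + a * u ^ (a-1) ≤ 0)]
    · have l := M2_lower h.le hu
      have r := M2_upper h.le ha2 hu
      have h1 : (1+u) ^ a - u ^ a ≤ a * u ^ (a-1) := by linarith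
      have h2 : 0 ≤ (1+u) ^ a - u ^ a := by linarith
      nlinarith
  calc ((1+u) ^ a - u ^ a) ^ 2 ≤ (a * u ^ (a-1)) ^ 2 := key
    _ = a ^ 2 * u ^ (2*a-2) := by
        rw [mul_pow, rpow_sq hu]
        congr 2
        ring

section
variable {a : ℝ}

lemma integrable_f_sq (ha1 : -(1/2) < a) (ha2 : a < 1/2) :
    IntegrableOn (fun u : ℝ => ((1+u) ^ a - u ^ a) ^ 2) (Ioi (0:ℝ)) := by
  have hcont : ContinuousOn (fun u : ℝ => ((1+u) ^ a - u ^ a) ^ 2) (Ioi 0) :=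
    ((contOn_pow2 a).sub (contOn_pow1 a)).pow 2
  have htail : ∀ u ∈ Ioi (1:ℝ), |((1+u) ^ a - u ^ a) ^ 2| ≤ a^2 * u ^ (2*a-2) := by
    intro u hu
    have hu0 : (0:ℝ) < u := lt_trans one_pos hu
    rw [abs_of_nonneg (sq_nonneg _)]
    exact f_sq_bound (by linarith) (by linarith) hu0
  rcases le_or_gt a 0 with h | h
  · refine integrableOn_Ioi_of_bounds hcont (r1 := 2*a) (r2 := 2*a-2) (c1 := 1) (c2 := a^2)
      (by linarith) (by linarith) ?_ htail
    intro u hu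
    have hu0 : (0:ℝ) < u := hu.1
    rw [abs_of_nonneg (sq_nonneg _), one_mul, ← rpow_sq hu0]
    have h1 : (0:ℝ) ≤ u ^ a := Real.rpow_nonneg hu0.le _
    have h2 : (0:ℝ) ≤ (1+u) ^ a := Real.rpow_nonneg (by linarith) _
    have h3 : (1+u) ^ a ≤ u ^ a := M1_upper h hu0
    nlinarith
  · refine integrableOn_Ioi_of_bounds hcont (r1 := 0) (r2 := 2*a-2) (c1 := 4) (c2 := a^2)
      (by norm_num) (by linarith) ?_ htail
    intro u hu
    have hu0 : (0:ℝ) < u := hu.1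
    rw [abs_of_nonneg (sq_nonneg _), Real.rpow_zero, mul_one]
    have h1 : (0:ℝ) ≤ u ^ a := Real.rpow_nonneg hu0.le _
    have h2 : u ^ a ≤ (1+u) ^ a := M2_lower h.le hu0
    have h3 : (1+u) ^ a ≤ 2 := by
      calc (1+u) ^ a ≤ (1+u) ^ (1:ℝ) :=
            Real.rpow_le_rpow_of_exponent_le (by linarith [hu.2]) (by linarith)
        _ = 1 + u := Real.rpow_one _
        _ ≤ 2 := by linarith [hu.2]
    nlinarith

lemma integrable_w_neg (ha1 : -(1/2) < a) (ha2 : a < 0) :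
    IntegrableOn (fun u : ℝ => u ^ a * (1+u) ^ (a-1)) (Ioi (0:ℝ)) := by
  have hcont : ContinuousOn (fun u : ℝ => u ^ a * (1+u) ^ (a-1)) (Ioi 0) :=
    (contOn_pow1 a).mul (contOn_pow2 (a-1))
  refine integrableOn_Ioi_of_bounds hcont (r1 := a) (r2 := 2*a-1) (c1 := 1) (c2 := 1)
    (by linarith) (by linarith) ?_ ?_
  · intro u hu
    have hu0 : (0:ℝ) < u := hu.1
    have h1 : (0:ℝ) ≤ u ^ a := Real.rpow_nonneg hu0.le _
    have h2 : (0:ℝ) ≤ (1+u) ^ (a-1) := Real.rpow_nonneg (by linarith) _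
    have h3 : (1+u) ^ (a-1) ≤ 1 :=
      Real.rpow_le_one_of_one_le_of_nonpos (by linarith) (by linarith)
    rw [abs_of_nonneg (mul_nonneg h1 h2), one_mul]
    nlinarith
  · intro u hu
    have hu0 : (0:ℝ) < u := lt_trans one_pos hu
    have h1 : (0:ℝ) ≤ u ^ a := Real.rpow_nonneg hu0.le _
    have h2 : (0:ℝ) ≤ (1+u) ^ (a-1) := Real.rpow_nonneg (by linarith) _
    have h3 : (1+u) ^ (a-1) ≤ u ^ (a-1) := M1_upper (by linarith) hu0
    rw [abs_of_nonneg (mul_nonneg h1 h2), one_mul,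
      show 2*a-1 = a + (a-1) by ring, Real.rpow_add hu0]
    exact mul_le_mul_of_nonneg_left h3 h1

lemma integrable_d_pos (ha1 : 0 < a) (ha2 : a < 1/2) :
    IntegrableOn (fun u : ℝ => u ^ a * ((1+u) ^ (a-1) - u ^ (a-1))) (Ioi (0:ℝ)) := by
  have hcont : ContinuousOn (fun u : ℝ => u ^ a * ((1+u) ^ (a-1) - u ^ (a-1))) (Ioi 0) :=
    (contOn_pow1 a).mul ((contOn_pow2 (a-1)).sub (contOn_pow1 (a-1)))
  have habs : ∀ u : ℝ, 0 < u → |u ^ a * ((1+u) ^ (a-1) - u ^ (a-1))|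
      = u ^ a * (u ^ (a-1) - (1+u) ^ (a-1)) := by
    intro u hu0
    have h1 : (0:ℝ) ≤ u ^ a := Real.rpow_nonneg hu0.le _
    have h3 : (1+u) ^ (a-1) ≤ u ^ (a-1) := M1_upper (by linarith) hu0
    rw [abs_mul, abs_of_nonneg h1, abs_of_nonpos (by linarith), neg_sub]
  refine integrableOn_Ioi_of_bounds hcont (r1 := 2*a-1) (r2 := 2*a-2) (c1 := 1) (c2 := 1-a)
    (by linarith) (by linarith) ?_ ?_
  · intro u hu
    have hu0 : (0:ℝ) < u := hu.1
    rw [habs u hu0, one_mul, show 2*a-1 = a + (a-1) by ring, Real.rpow_add hu0]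
    have h2 : (0:ℝ) ≤ (1+u) ^ (a-1) := Real.rpow_nonneg (by linarith) _
    have h1 : (0:ℝ) ≤ u ^ a := Real.rpow_nonneg hu0.le _
    nlinarith [Real.rpow_nonneg hu0.le (a-1)]
  · intro u hu
    have hu0 : (0:ℝ) < u := lt_trans one_pos hu
    rw [habs u hu0]
    have hml := M1_lower (c := a-1) (by linarith) (by linarith) hu0
    have h1 : (0:ℝ) ≤ u ^ a := Real.rpow_nonneg hu0.le _
    have key : u ^ (a-1) - (1+u) ^ (a-1) ≤ (1-a) * u ^ (a-1-1) := by linarith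
    calc u ^ a * (u ^ (a-1) - (1+u) ^ (a-1)) ≤ u ^ a * ((1-a) * u ^ (a-1-1)) :=
          mul_le_mul_of_nonneg_left key h1
      _ = (1-a) * u ^ (2*a-2) := by
          rw [show 2*a-2 = a + (a-1-1) by ring, Real.rpow_add hu0]
          ring

lemma integrable_b_pos (ha1 : 0 < a) (ha2 : a < 1/2) :
    IntegrableOn (fun u : ℝ => u ^ a * (1+u) ^ (a-2)) (Ioi (0:ℝ)) := by
  have hcont : ContinuousOn (fun u : ℝ => u ^ a * (1+u) ^ (a-2)) (Ioi 0) :=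
    (contOn_pow1 a).mul (contOn_pow2 (a-2))
  refine integrableOn_Ioi_of_bounds hcont (r1 := a) (r2 := 2*a-2) (c1 := 1) (c2 := 1)
    (by linarith) (by linarith) ?_ ?_
  · intro u hu
    have hu0 : (0:ℝ) < u := hu.1
    have h1 : (0:ℝ) ≤ u ^ a := Real.rpow_nonneg hu0.le _
    have h2 : (0:ℝ) ≤ (1+u) ^ (a-2) := Real.rpow_nonneg (by linarith) _
    have h3 : (1+u) ^ (a-2) ≤ 1 :=
      Real.rpow_le_one_of_one_le_of_nonpos (by linarith) (by linarith)
    rw [abs_of_nonneg (mul_nonneg h1 h2), one_mul]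
    nlinarith
  · intro u hu
    have hu0 : (0:ℝ) < u := lt_trans one_pos hu
    have h1 : (0:ℝ) ≤ u ^ a := Real.rpow_nonneg hu0.le _
    have h2 : (0:ℝ) ≤ (1+u) ^ (a-2) := Real.rpow_nonneg (by linarith) _
    have h3 : (1+u) ^ (a-2) ≤ u ^ (a-2) := M1_upper (by linarith) hu0
    rw [abs_of_nonneg (mul_nonneg h1 h2), one_mul,
      show 2*a-2 = a + (a-2) by ring, Real.rpow_add hu0]
    exact mul_le_mul_of_nonneg_left h3 h1

end

lemma tendsto_rpow1_zero {c : ℝ} (hc : 0 < c) :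
    Tendsto (fun u : ℝ => u ^ c) (nhdsWithin 0 (Ioi 0)) (nhds 0) := by
  have h := (Real.continuousAt_rpow_const 0 c (Or.inr hc.le)).continuousWithinAt (s := Ioi 0)
  simpa [ContinuousWithinAt, Real.zero_rpow hc.ne'] using h

lemma tendsto_rpow2_one (c : ℝ) :
    Tendsto (fun u : ℝ => (1+u) ^ c) (nhdsWithin 0 (Ioi 0)) (nhds 1) := by
  have h1 : ContinuousAt (fun u : ℝ => (1+u) ^ c) 0 := by
    have hf : ContinuousAt (fun u : ℝ => 1 + u) 0 :=
      (continuous_const.add continuous_id).continuousAt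
    have hg : ContinuousAt (fun x : ℝ => x ^ c) ((fun u : ℝ => 1 + u) 0) := by
      simpa using Real.continuousAt_rpow_const 1 c (Or.inl one_ne_zero)
    exact hg.comp hf
  have h := h1.continuousWithinAt (s := Ioi 0)
  simpa [ContinuousWithinAt, Real.one_rpow] using h

lemma tendsto_rpow2_zero_top {c : ℝ} (hc : c < 0) :
    Tendsto (fun u : ℝ => (1+u) ^ c) atTop (nhds 0) := by
  have h := tendsto_rpow_neg_atTop (y := -c) (by linarith)
  simp only [neg_neg] at h
  exact h.comp (tendsto_atTop_add_const_left atTop 1 tendsto_id)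

lemma tendsto_uf2_top {a : ℝ} (ha1 : -1 ≤ a) (ha2 : a < 1/2) :
    Tendsto (fun u : ℝ => u * ((1+u) ^ a - u ^ a) ^ 2) atTop (nhds 0) := by
  have hupper : Tendsto (fun u : ℝ => a^2 * u ^ (2*a-1)) atTop (nhds 0) := by
    have h := (tendsto_rpow_neg_atTop (y := 1-2*a) (by linarith)).const_mul (a^2)
    simp only [mul_zero] at h
    refine h.congr fun u => ?_
    rw [show -(1-2*a) = 2*a-1 by ring]
  refine tendsto_of_tendsto_of_tendsto_of_le_of_le' tendsto_const_nhds hupper ?_ ?_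
  · filter_upwards [eventually_ge_atTop (0:ℝ)] with u hu
    positivity
  · filter_upwards [eventually_ge_atTop (1:ℝ)] with u hu
    have hu0 : (0:ℝ) < u := lt_of_lt_of_le one_pos hu
    have hb := f_sq_bound ha1 (by linarith) hu0
    calc u * ((1+u) ^ a - u ^ a) ^ 2 ≤ u * (a^2 * u ^ (2*a-2)) :=
          mul_le_mul_of_nonneg_left hb hu0.le
      _ = a^2 * u ^ (2*a-1) := by
          rw [show 2*a-1 = 1 + (2*a-2) by ring, Real.rpow_add hu0, Real.rpow_one]
          ring

lemma ftc_neg {a : ℝ} (ha1 : -(1/2) < a) (ha2 : a < 0) :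
    ∫ u in Ioi (0:ℝ),
        ((1+2*a) * ((1+u) ^ a - u ^ a) ^ 2 + 2*a * (u ^ a * (1+u) ^ (a-1))) = -1 := by
  have hint : IntegrableOn (fun u : ℝ =>
      (1+2*a) * ((1+u) ^ a - u ^ a) ^ 2 + 2*a * (u ^ a * (1+u) ^ (a-1))) (Ioi 0) :=
    ((integrable_f_sq ha1 (by linarith)).const_mul _).add
      ((integrable_w_neg ha1 ha2).const_mul _)
  have hderiv : ∀ u ∈ Ioi (0:ℝ), HasDerivAt
      (fun x => x * ((1+x) ^ a - x ^ a) ^ 2 + (1+x) ^ (2*a))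
      ((1+2*a) * ((1+u) ^ a - u ^ a) ^ 2 + 2*a * (u ^ a * (1+u) ^ (a-1))) u :=
    fun u hu => hasDerivAt_G hu
  have htop : Tendsto (fun x : ℝ => x * ((1+x) ^ a - x ^ a) ^ 2 + (1+x) ^ (2*a))
      atTop (nhds 0) := by
    have h := (tendsto_uf2_top (by linarith) (by linarith)).add
      (tendsto_rpow2_zero_top (by linarith : 2*a < 0))
    simpa using h
  have hval : (fun x : ℝ => x * ((1+x) ^ a - x ^ a) ^ 2 + (1+x) ^ (2*a)) 0 = 1 := by
    simp
  have hcont : ContinuousWithinAt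
      (fun x : ℝ => x * ((1+x) ^ a - x ^ a) ^ 2 + (1+x) ^ (2*a)) (Ici 0) 0 := by
    rw [← continuousWithinAt_Ioi_iff_Ici]
    unfold ContinuousWithinAt
    rw [hval]
    have l1 := tendsto_rpow2_one (2*a)
    have l2 := tendsto_rpow2_one a
    have l3 := tendsto_rpow1_zero (show (0:ℝ) < 1+a by linarith)
    have l4 := tendsto_rpow1_zero (show (0:ℝ) < 1+2*a by linarith)
    have l0 : Tendsto (fun u : ℝ => u) (nhdsWithin 0 (Ioi 0)) (nhds 0) :=
      tendsto_id.mono_left nhdsWithin_le_nhds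
    have lim := (((l0.mul l1).sub ((l3.mul l2).const_mul 2)).add l4).add l1
    rw [show (0:ℝ) * 1 - 2 * (0 * 1) + 0 + 1 = 1 by norm_num] at lim
    refine Tendsto.congr' ?_ lim
    filter_upwards [self_mem_nhdsWithin] with u hu
    have hu0 : (0:ℝ) < u := hu
    have e1 : ((1+u) ^ a) ^ 2 = (1+u) ^ (2*a) := rpow_sq (by positivity) a
    have e2 : (u ^ a) ^ 2 = u ^ (2*a) := rpow_sq hu0 a
    have e3 : u ^ (1+a) = u * u ^ a := by
      rw [Real.rpow_add hu0, Real.rpow_one]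
    have e4 : u ^ (1+2*a) = u * u ^ (2*a) := by
      rw [Real.rpow_add hu0, Real.rpow_one]
    rw [e3, e4, ← e1, ← e2]
    ring
  have h := MeasureTheory.integral_Ioi_of_hasDerivAt_of_tendsto hcont hderiv hint htop
  rw [h]
  norm_num [Real.one_rpow]

lemma hasDerivAt_G2 {a u : ℝ} (hu : 0 < u) :
    HasDerivAt (fun x : ℝ => x * ((1+x) ^ a - x ^ a) ^ 2 + (1+x) ^ (2*a) - x ^ (2*a))
      ((1+2*a) * ((1+u) ^ a - u ^ a) ^ 2
        + 2*a * (u ^ a * ((1+u) ^ (a-1) - u ^ (a-1)))) u := by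
  refine ((hasDerivAt_G hu).sub (hasDerivAt_pow1 hu (2*a))).congr_deriv ?_
  have eD : u ^ (2*a-1) = u ^ a * u ^ (a-1) := by
    rw [← Real.rpow_add hu]
    congr 1
    ring
  rw [eD]
  ring

lemma hasDerivAt_H2 {a u : ℝ} (hu : 0 < u) :
    HasDerivAt (fun x : ℝ => x ^ (1+a) * (1+x) ^ (a-1) - x ^ (2*a))
      (2*a * (u ^ a * ((1+u) ^ (a-1) - u ^ (a-1)))
        + (1-a) * (u ^ a * (1+u) ^ (a-2))) u := by
  have h := ((hasDerivAt_pow1 hu (1+a)).mul (hasDerivAt_pow2 hu (a-1))).sub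
    (hasDerivAt_pow1 hu (2*a))
  refine h.congr_deriv ?_
  have e3 : u ^ (1+a) = u * u ^ a := by rw [Real.rpow_add hu, Real.rpow_one]
  have eB : (1+u) ^ (a-1) = (1+u) * (1+u) ^ (a-1-1) := mul_pow2 (by positivity) (a-1)
  have eD : u ^ (2*a-1) = u ^ a * u ^ (a-1) := by
    rw [← Real.rpow_add hu]; congr 1; ring
  have eE : u ^ (1+a-1) = u ^ a := by norm_num
  have eF : (a-1-1) = a - 2 := by ring
  rw [eE, eD, e3, eB, eF]
  ring

lemma tendsto_diff2a_top {a : ℝ} (ha1 : 0 < a) (ha2 : a < 1/2) :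
    Tendsto (fun u : ℝ => (1+u) ^ (2*a) - u ^ (2*a)) atTop (nhds 0) := by
  have hupper : Tendsto (fun u : ℝ => 2*a * u ^ (2*a-1)) atTop (nhds 0) := by
    have h := (tendsto_rpow_neg_atTop (y := 1-2*a) (by linarith)).const_mul (2*a)
    simp only [mul_zero] at h
    refine h.congr fun u => ?_
    rw [show -(1-2*a) = 2*a-1 by ring]
  refine tendsto_of_tendsto_of_tendsto_of_le_of_le' tendsto_const_nhds hupper ?_ ?_
  · filter_upwards [eventually_ge_atTop (1:ℝ)] with u hu
    have hu0 : (0:ℝ) < u := lt_of_lt_of_le one_pos hu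
    have := M2_lower (c := 2*a) (by linarith) hu0
    linarith
  · filter_upwards [eventually_ge_atTop (1:ℝ)] with u hu
    have hu0 : (0:ℝ) < u := lt_of_lt_of_le one_pos hu
    have := M2_upper (c := 2*a) (by linarith) (by linarith) hu0
    linarith

lemma tendsto_H2_top {a : ℝ} (ha1 : 0 < a) (ha2 : a < 1/2) :
    Tendsto (fun u : ℝ => u ^ (1+a) * (1+u) ^ (a-1) - u ^ (2*a)) atTop (nhds 0) := by
  have hlower : Tendsto (fun u : ℝ => (a-1) * u ^ (2*a-1)) atTop (nhds 0) := by
    have h := (tendsto_rpow_neg_atTop (y := 1-2*a) (by linarith)).const_mul (a-1)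
    simp only [mul_zero] at h
    refine h.congr fun u => ?_
    rw [show -(1-2*a) = 2*a-1 by ring]
  refine tendsto_of_tendsto_of_tendsto_of_le_of_le' hlower tendsto_const_nhds ?_ ?_
  · filter_upwards [eventually_ge_atTop (1:ℝ)] with u hu
    have hu0 : (0:ℝ) < u := lt_of_lt_of_le one_pos hu
    have h1 : (0:ℝ) ≤ u ^ (1+a) := Real.rpow_nonneg hu0.le _
    have hml := M1_lower (c := a-1) (by linarith) (by linarith) hu0
    have h2 := mul_le_mul_of_nonneg_left hml h1
    have e1 : u ^ (1+a) * u ^ (a-1) = u ^ (2*a) := by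
      rw [← Real.rpow_add hu0]; congr 1; ring
    have e2 : u ^ (1+a) * u ^ (a-1-1) = u ^ (2*a-1) := by
      rw [← Real.rpow_add hu0]; congr 1; ring
    have expand : u ^ (1+a) * (u ^ (a-1) + (a-1) * u ^ (a-1-1))
        = u ^ (2*a) + (a-1) * u ^ (2*a-1) := by
      rw [mul_add, e1, show u ^ (1+a) * ((a-1) * u ^ (a-1-1)) = (a-1) * (u ^ (1+a) * u ^ (a-1-1)) by ring, e2]
    nlinarith [h2, expand]
  · filter_upwards [eventually_ge_atTop (1:ℝ)] with u hu
    have hu0 : (0:ℝ) < u := lt_of_lt_of_le one_pos hu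
    have h1 : (0:ℝ) ≤ u ^ (1+a) := Real.rpow_nonneg hu0.le _
    have hmu := M1_upper (c := a-1) (by linarith) hu0
    have h2 := mul_le_mul_of_nonneg_left hmu h1
    have e1 : u ^ (1+a) * u ^ (a-1) = u ^ (2*a) := by
      rw [← Real.rpow_add hu0]; congr 1; ring
    nlinarith [h2]

lemma ftc_pos {a : ℝ} (ha1 : 0 < a) (ha2 : a < 1/2) :
    ∫ u in Ioi (0:ℝ), ((1+2*a) * ((1+u) ^ a - u ^ a) ^ 2
      + 2*a * (u ^ a * ((1+u) ^ (a-1) - u ^ (a-1)))) = -1 := by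
  have hint : IntegrableOn (fun u : ℝ => (1+2*a) * ((1+u) ^ a - u ^ a) ^ 2
      + 2*a * (u ^ a * ((1+u) ^ (a-1) - u ^ (a-1)))) (Ioi 0) :=
    ((integrable_f_sq (by linarith) ha2).const_mul _).add
      ((integrable_d_pos ha1 ha2).const_mul _)
  have hderiv : ∀ u ∈ Ioi (0:ℝ), HasDerivAt
      (fun x => x * ((1+x) ^ a - x ^ a) ^ 2 + (1+x) ^ (2*a) - x ^ (2*a))
      ((1+2*a) * ((1+u) ^ a - u ^ a) ^ 2
        + 2*a * (u ^ a * ((1+u) ^ (a-1) - u ^ (a-1)))) u :=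
    fun u hu => hasDerivAt_G2 hu
  have htop : Tendsto (fun x : ℝ => x * ((1+x) ^ a - x ^ a) ^ 2 + (1+x) ^ (2*a) - x ^ (2*a))
      atTop (nhds 0) := by
    have h := (tendsto_uf2_top (by linarith) (by linarith)).add (tendsto_diff2a_top ha1 ha2)
    simp only [add_zero] at h
    refine h.congr fun u => ?_
    ring
  have hcont : ContinuousWithinAt
      (fun x : ℝ => x * ((1+x) ^ a - x ^ a) ^ 2 + (1+x) ^ (2*a) - x ^ (2*a)) (Ici 0) 0 := by
    rw [← continuousWithinAt_Ioi_iff_Ici]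
    unfold ContinuousWithinAt
    rw [show (fun x : ℝ => x * ((1+x) ^ a - x ^ a) ^ 2 + (1+x) ^ (2*a) - x ^ (2*a)) 0 = 1 by
      simp [Real.zero_rpow (by linarith : 2*a ≠ 0)]]
    have l1 := tendsto_rpow2_one (2*a)
    have l2 := tendsto_rpow2_one a
    have l3 := tendsto_rpow1_zero (show (0:ℝ) < 1+a by linarith)
    have l4 := tendsto_rpow1_zero (show (0:ℝ) < 1+2*a by linarith)
    have l5 := tendsto_rpow1_zero (show (0:ℝ) < 2*a by linarith)
    have l0 : Tendsto (fun u : ℝ => u) (nhdsWithin 0 (Ioi 0)) (nhds 0) :=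
      tendsto_id.mono_left nhdsWithin_le_nhds
    have lim := ((((l0.mul l1).sub ((l3.mul l2).const_mul 2)).add l4).add l1).sub l5
    rw [show (0:ℝ) * 1 - 2 * (0 * 1) + 0 + 1 - 0 = 1 by norm_num] at lim
    refine Tendsto.congr' ?_ lim
    filter_upwards [self_mem_nhdsWithin] with u hu
    have hu0 : (0:ℝ) < u := hu
    have e1 : ((1+u) ^ a) ^ 2 = (1+u) ^ (2*a) := rpow_sq (by positivity) a
    have e2 : (u ^ a) ^ 2 = u ^ (2*a) := rpow_sq hu0 a
    have e3 : u ^ (1+a) = u * u ^ a := by rw [Real.rpow_add hu0, Real.rpow_one]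
    have e4 : u ^ (1+2*a) = u * u ^ (2*a) := by rw [Real.rpow_add hu0, Real.rpow_one]
    rw [e3, e4, ← e1, ← e2]
    ring
  have h := MeasureTheory.integral_Ioi_of_hasDerivAt_of_tendsto hcont hderiv hint htop
  rw [h]
  norm_num [Real.one_rpow, Real.zero_rpow (by linarith : 2*a ≠ 0)]

lemma ftc_H2 {a : ℝ} (ha1 : 0 < a) (ha2 : a < 1/2) :
    ∫ u in Ioi (0:ℝ), (2*a * (u ^ a * ((1+u) ^ (a-1) - u ^ (a-1)))
      + (1-a) * (u ^ a * (1+u) ^ (a-2))) = 0 := by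
  have hint : IntegrableOn (fun u : ℝ => 2*a * (u ^ a * ((1+u) ^ (a-1) - u ^ (a-1)))
      + (1-a) * (u ^ a * (1+u) ^ (a-2))) (Ioi 0) :=
    ((integrable_d_pos ha1 ha2).const_mul _).add ((integrable_b_pos ha1 ha2).const_mul _)
  have hderiv : ∀ u ∈ Ioi (0:ℝ), HasDerivAt
      (fun x => x ^ (1+a) * (1+x) ^ (a-1) - x ^ (2*a))
      (2*a * (u ^ a * ((1+u) ^ (a-1) - u ^ (a-1)))
        + (1-a) * (u ^ a * (1+u) ^ (a-2))) u :=
    fun u hu => hasDerivAt_H2 hu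
  have htop := tendsto_H2_top ha1 ha2
  have hcont : ContinuousWithinAt
      (fun x : ℝ => x ^ (1+a) * (1+x) ^ (a-1) - x ^ (2*a)) (Ici 0) 0 := by
    rw [← continuousWithinAt_Ioi_iff_Ici]
    unfold ContinuousWithinAt
    rw [show (fun x : ℝ => x ^ (1+a) * (1+x) ^ (a-1) - x ^ (2*a)) 0 = 0 by
      simp [Real.zero_rpow (by linarith : 2*a ≠ 0),
        Real.zero_rpow (by linarith : 1+a ≠ 0)]]
    have l2 := tendsto_rpow2_one (a-1)
    have l3 := tendsto_rpow1_zero (show (0:ℝ) < 1+a by linarith)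
    have l5 := tendsto_rpow1_zero (show (0:ℝ) < 2*a by linarith)
    have lim := (l3.mul l2).sub l5
    rw [show (0:ℝ) * 1 - 0 = 0 by norm_num] at lim
    exact lim
  have h := MeasureTheory.integral_Ioi_of_hasDerivAt_of_tendsto hcont hderiv hint htop
  rw [h]
  norm_num [Real.zero_rpow (by linarith : 2*a ≠ 0), Real.zero_rpow (by linarith : 1+a ≠ 0)]

lemma W_val {a : ℝ} (ha1 : -(1/2) < a) (ha2 : a < 0) :
    ∫ u in Ioi (0:ℝ), u ^ a * (1+u) ^ (a-1)
      = Real.Gamma (a+1) * Real.Gamma (-(2*a)) / Real.Gamma (1-a) := by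
  have hb := real_beta_Ioi (p := a+1) (q := -(2*a)) (by linarith) (by linarith)
  rw [show a+1-1 = a by ring] at hb
  rw [show -(a+1 + -(2*a)) = a-1 by ring] at hb
  rw [show a+1 + -(2*a) = 1-a by ring] at hb
  exact hb

lemma B2_val {a : ℝ} (ha1 : 0 < a) (ha2 : a < 1/2) :
    ∫ u in Ioi (0:ℝ), u ^ a * (1+u) ^ (a-2)
      = Real.Gamma (a+1) * Real.Gamma (1-2*a) / Real.Gamma (2-a) := by
  have hb := real_beta_Ioi (p := a+1) (q := 1-2*a) (by linarith) (by linarith)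
  rw [show a+1-1 = a by ring] at hb
  rw [show -(a+1 + (1-2*a)) = a-2 by ring] at hb
  rw [show a+1 + (1-2*a) = 2-a by ring] at hb
  exact hb

/-- The central evaluation, for all `-1/2 < a < 1/2`. -/
lemma key_I {a : ℝ} (ha1 : -(1/2) < a) (ha2 : a < 1/2) :
    (1+2*a) * (∫ u in Ioi (0:ℝ), ((1+u) ^ a - u ^ a) ^ 2)
      = Real.Gamma (a+1) * Real.Gamma (1-2*a) / Real.Gamma (1-a) - 1 := by
  rcases lt_trichotomy a 0 with h | h | h
  · -- negative case
    have hsplit := ftc_neg ha1 h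
    rw [MeasureTheory.integral_add ((integrable_f_sq ha1 ha2).const_mul _)
      ((integrable_w_neg ha1 h).const_mul _), MeasureTheory.integral_const_mul,
      MeasureTheory.integral_const_mul, W_val ha1 h] at hsplit
    have hGam : Real.Gamma (1-2*a) = -(2*a) * Real.Gamma (-(2*a)) := by
      rw [show 1-2*a = -(2*a)+1 by ring, Real.Gamma_add_one (by linarith)]
    have hC : Real.Gamma (1-a) ≠ 0 := (Real.Gamma_pos_of_pos (by linarith)).ne'
    rw [hGam]
    field_simp
    field_simp at hsplit
    linarith
  · -- zero case
    subst h
    have hI : (∫ u in Ioi (0:ℝ), ((1+u) ^ (0:ℝ) - u ^ (0:ℝ)) ^ 2) = 0 := by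
      simp [Real.rpow_zero]
    rw [hI]
    norm_num [Real.Gamma_one]
  · -- positive case
    have hsplit := ftc_pos h ha2
    rw [MeasureTheory.integral_add ((integrable_f_sq ha1 ha2).const_mul _)
      ((integrable_d_pos h ha2).const_mul _), MeasureTheory.integral_const_mul,
      MeasureTheory.integral_const_mul] at hsplit
    have hsplit2 := ftc_H2 h ha2
    rw [MeasureTheory.integral_add ((integrable_d_pos h ha2).const_mul _)
      ((integrable_b_pos h ha2).const_mul _), MeasureTheory.integral_const_mul,
      MeasureTheory.integral_const_mul, B2_val h ha2] at hsplit2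
    have hGam : Real.Gamma (2-a) = (1-a) * Real.Gamma (1-a) := by
      rw [show 2-a = (1-a)+1 by ring, Real.Gamma_add_one (by linarith)]
    have hC : Real.Gamma (1-a) ≠ 0 := (Real.Gamma_pos_of_pos (by linarith)).ne'
    have ha' : (1:ℝ) - a ≠ 0 := by linarith
    rw [hGam] at hsplit2
    field_simp at hsplit2
    have hsplit3 : (2*a*(∫ u in Ioi (0:ℝ), u ^ a * ((1+u) ^ (a-1) - u ^ (a-1)))) * Real.Gamma (1-a)
        + Real.Gamma (a+1) * Real.Gamma (1-2*a) = 0 := by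
      have hfac : (1-a) * ((2*a*(∫ u in Ioi (0:ℝ), u ^ a * ((1+u) ^ (a-1) - u ^ (a-1)))) * Real.Gamma (1-a)
          + Real.Gamma (a+1) * Real.Gamma (1-2*a)) = 0 := by linear_combination (1-a) * hsplit2
      exact (mul_eq_zero.mp hfac).resolve_left ha'
    field_simp
    linear_combination Real.Gamma (1-a) * hsplit - hsplit3

lemma gamma_id {H : ℝ} (hH0 : 0 < H) (hH1 : H < 1) :
    Real.Gamma (H+1/2) * Real.Gamma (2-2*H) / Real.Gamma (3/2-H) / (2*H)
      = Real.Gamma (H+1/2) ^ 2 / (Real.Gamma (2*H+1) * Real.sin (π*H)) := by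
  rcases eq_or_ne H (1/2) with h | h
  · subst h
    norm_num [Real.Gamma_one, Real.Gamma_two, mul_one_div, Real.sin_pi_div_two]
  · have hπ := Real.pi_pos
    have hS : 0 < Real.sin (π*H) :=
      Real.sin_pos_of_pos_of_lt_pi (by positivity) (by nlinarith)
    have hC : Real.cos (π*H) ≠ 0 := by
      intro hc
      rcases Real.cos_eq_zero_iff.mp hc with ⟨k, hk⟩
      have hH : H = (2*(k:ℝ)+1)/2 := by
        have h2 : π * H = π * ((2*(k:ℝ)+1)/2) := by rw [hk]; ring
        exact mul_left_cancel₀ (ne_of_gt hπ) h2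
      have hk1 : (-1:ℝ) < (k:ℝ) := by rw [hH] at hH0; linarith
      have hk2 : ((k:ℝ):ℝ) < 1 := by rw [hH] at hH1; linarith
      have : k = 0 := by
        have b1 : (-1:ℤ) < k := by exact_mod_cast hk1
        have b2 : k < 1 := by exact_mod_cast hk2
        omega
      rw [this] at hH
      norm_num at hH
      exact h hH
    have hG2H : 0 < Real.Gamma (2*H) := Real.Gamma_pos_of_pos (by linarith)
    have hA : 0 < Real.Gamma (H+1/2) := Real.Gamma_pos_of_pos (by linarith)
    have r1 : Real.Gamma (2*H) * Real.Gamma (1-2*H)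
        = π / (2*Real.sin (π*H)*Real.cos (π*H)) := by
      rw [Real.Gamma_mul_Gamma_one_sub (2*H), show π*(2*H) = 2*(π*H) by ring,
        Real.sin_two_mul]
    have r2 : Real.Gamma (H+1/2) * Real.Gamma (1/2-H) = π / Real.cos (π*H) := by
      have h0 := Real.Gamma_mul_Gamma_one_sub (H+1/2)
      rw [show 1-(H+1/2) = 1/2-H by ring] at h0
      rw [h0, show π*(H+1/2) = π*H + π/2 by ring, Real.sin_add_pi_div_two]
    have e1 : Real.Gamma (2*H+1) = 2*H * Real.Gamma (2*H) :=
      Real.Gamma_add_one (by linarith)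
    have e2 : Real.Gamma (2-2*H) = (1-2*H) * Real.Gamma (1-2*H) := by
      rw [show (2:ℝ)-2*H = (1-2*H)+1 by ring,
        Real.Gamma_add_one (fun hz => h (by linarith))]
    have e3 : Real.Gamma (3/2-H) = (1/2-H) * Real.Gamma (1/2-H) := by
      rw [show (3:ℝ)/2-H = (1/2-H)+1 by ring,
        Real.Gamma_add_one (fun hz => h (by linarith))]
    have f1 : Real.Gamma (1-2*H)
        = π / (2*Real.sin (π*H)*Real.cos (π*H)) / Real.Gamma (2*H) := by
      field_simp [hG2H.ne'] at r1 ⊢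
      linear_combination r1
    have f2 : Real.Gamma (1/2-H) = π / Real.cos (π*H) / Real.Gamma (H+1/2) := by
      field_simp [hA.ne'] at r2 ⊢
      linear_combination r2
    have h12 : (1:ℝ)/2 - H ≠ 0 := fun hz => h (by linarith)
    have h2H : (2:ℝ)*H ≠ 0 := by positivity
    have h12' : (1:ℝ) - 2*H ≠ 0 := fun hz => h (by linarith)
    rw [e1, e2, e3, f1, f2, show (1:ℝ)-2*H = 2*(1/2-H) by ring]
    have hπ' := hπ.ne'
    generalize 1/2 - H = k at h12 ⊢
    generalize Real.sin (π*H) = s at hS ⊢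
    generalize Real.cos (π*H) = c at hC ⊢
    generalize Real.Gamma (2*H) = G at hG2H ⊢
    generalize Real.Gamma (H+1/2) = A at hA ⊢
    generalize π = p at hπ' ⊢
    field_simp

/-- For every real `H` with `0 < H < 1`,
`∫_0^∞ ((1+u)^(H-1/2) - u^(H-1/2))² du + 1/(2H) = Γ(H+1/2)² / (Γ(2H+1) · sin(πH))`;
equivalently, the Mandelbrot–Van Ness scaling constant
`c_H = (∫_0^∞ ((1+u)^(H-1/2) - u^(H-1/2))² du + 1/(2H))^(-1/2)` equals
`√(Γ(2H+1) · sin(πH)) / Γ(H+1/2)`. -/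
theorem mvn_scaling_constant (H : ℝ) (hH0 : 0 < H) (hH1 : H < 1) :
    (∫ u in Set.Ioi (0 : ℝ), ((1 + u) ^ (H - 1/2) - u ^ (H - 1/2)) ^ 2) + 1 / (2 * H)
        = (Real.Gamma (H + 1/2)) ^ 2 / (Real.Gamma (2 * H + 1) * Real.sin (π * H)) ∧
    ((∫ u in Set.Ioi (0 : ℝ), ((1 + u) ^ (H - 1/2) - u ^ (H - 1/2)) ^ 2) + 1 / (2 * H))
          ^ (-(1 / 2 : ℝ))
        = Real.sqrt (Real.Gamma (2 * H + 1) * Real.sin (π * H)) / Real.Gamma (H + 1/2) := by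
  have key := key_I (a := H - 1/2) (by linarith) (by linarith)
  rw [show H - 1/2 + 1 = H + 1/2 by ring] at key
  rw [show 1-2*(H-1/2) = 2-2*H by ring] at key
  rw [show 1-(H-1/2) = 3/2-H by ring] at key
  rw [show 1+2*(H-1/2) = 2*H by ring] at key
  have h2H : (0:ℝ) < 2*H := by linarith
  have hgid := gamma_id hH0 hH1
  have hI : (∫ u in Set.Ioi (0:ℝ), ((1 + u) ^ (H - 1/2) - u ^ (H - 1/2)) ^ 2)
      = (Real.Gamma (H+1/2) * Real.Gamma (2-2*H) / Real.Gamma (3/2-H) - 1)/(2*H) := by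
    rw [eq_div_iff h2H.ne']
    linarith [key]
  have part1 : (∫ u in Set.Ioi (0 : ℝ), ((1 + u) ^ (H - 1/2) - u ^ (H - 1/2)) ^ 2) + 1 / (2 * H)
      = (Real.Gamma (H + 1/2)) ^ 2 / (Real.Gamma (2 * H + 1) * Real.sin (π * H)) := by
    rw [hI, ← add_div,
      show Real.Gamma (H+1/2) * Real.Gamma (2-2*H) / Real.Gamma (3/2-H) - 1 + 1
        = Real.Gamma (H+1/2) * Real.Gamma (2-2*H) / Real.Gamma (3/2-H) by ring]
    exact hgid
  refine ⟨part1, ?_⟩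
  rw [part1]
  have hπ := Real.pi_pos
  have hS : 0 < Real.sin (π*H) :=
    Real.sin_pos_of_pos_of_lt_pi (by positivity) (by nlinarith)
  have hA : 0 < Real.Gamma (H+1/2) := Real.Gamma_pos_of_pos (by linarith)
  have hB : 0 < Real.Gamma (2*H+1) * Real.sin (π*H) :=
    mul_pos (Real.Gamma_pos_of_pos (by linarith)) hS
  rw [Real.rpow_neg (by positivity), ← Real.sqrt_eq_rpow,
    Real.sqrt_div (sq_nonneg _), Real.sqrt_sq hA.le, inv_div]
end

section
/- Let 1/2 < H < 1, let N be a positive integer with Δt = 1/N, and let r = jΔt and t = KΔt be grid points with integers 0 ≤ j < K. Then 0 ≤ ε_N(r,t) ≤ (H−1/2)·Δt^(H−1/2); that is, the sum ∑_{s=r+Δt}^{t} (H−1/2)(s−r)^(H−3/2) Δt is an upper Riemann sum for ∫_{r+Δt}^{t} (H−1/2)(s−r)^(H−3/2) ds, and the difference ε_N(r,t) between them lies in [0, (H−1/2)Δt^(H−1/2)]. -/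
open MeasureTheory

lemma int_pow_eq (p : ℝ) (hp : 0 < p) (a b : ℝ) :
    ∫ s in a..b, p * s ^ (p - 1) = b ^ p - a ^ p := by
  rw [intervalIntegral.integral_const_mul, integral_rpow (Or.inl (by linarith)),
    sub_add_cancel]
  field_simp

lemma integrable_pow (p : ℝ) (a b : ℝ) (ha : 0 < a) (hb : 0 < b) :
    IntervalIntegrable (fun s : ℝ => p * s ^ (p - 1)) volume a b := by
  apply ContinuousOn.intervalIntegrable
  apply ContinuousOn.mul continuousOn_const
  apply ContinuousOn.rpow_const continuousOn_id
  intro x hx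
  left
  rcases Set.mem_uIcc.mp hx with ⟨h1, _⟩ | ⟨h1, _⟩
  · exact ne_of_gt (lt_of_lt_of_le ha h1)
  · exact ne_of_gt (lt_of_lt_of_le hb h1)

lemma key_upper (p : ℝ) (hp : 0 < p) (hp1 : p < 1) (a : ℝ) (ha : 1 < a) :
    p * a ^ (p - 1) ≤ a ^ p - (a - 1) ^ p := by
  have h0 : (0:ℝ) < a - 1 := by linarith
  rw [← int_pow_eq p hp (a - 1) a]
  calc p * a ^ (p - 1) = ∫ _ in (a-1)..a, p * a ^ (p - 1) := by
        rw [intervalIntegral.integral_const, smul_eq_mul]; ring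
    _ ≤ ∫ s in (a-1)..a, p * s ^ (p - 1) := by
        apply intervalIntegral.integral_mono_on (by linarith)
          (intervalIntegrable_const) (integrable_pow p _ _ h0 (by linarith))
        intro x hx
        have hx0 : 0 < x := lt_of_lt_of_le h0 hx.1
        have := Real.rpow_le_rpow_of_nonpos hx0 hx.2 (by linarith : p - 1 ≤ 0)
        nlinarith

lemma key_lower (p : ℝ) (hp : 0 < p) (hp1 : p < 1) (a : ℝ) (ha : 0 < a) :
    (a + 1) ^ p - a ^ p ≤ p * a ^ (p - 1) := by
  rw [← int_pow_eq p hp a (a + 1)]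
  calc (∫ s in a..(a+1), p * s ^ (p - 1))
      ≤ ∫ _ in a..(a+1), p * a ^ (p - 1) := by
        apply intervalIntegral.integral_mono_on (by linarith)
          (integrable_pow p _ _ ha (by linarith)) intervalIntegrable_const
        intro x hx
        have := Real.rpow_le_rpow_of_nonpos ha hx.1 (by linarith : p - 1 ≤ 0)
        nlinarith
    _ = p * a ^ (p - 1) := by rw [intervalIntegral.integral_const, smul_eq_mul]; ring

lemma sum_lower (p : ℝ) (hp : 0 < p) (hp1 : p < 1) (n : ℕ) (hn : 1 ≤ n) :
    (n : ℝ) ^ p - 1 ≤ p * ∑ m ∈ Finset.Ico 1 n, (m : ℝ) ^ (p - 1) := by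
  induction n with
  | zero => omega
  | succ k ih =>
    rcases Nat.eq_or_lt_of_le hn with h | h
    · simp [← h]
    · have hk : 1 ≤ k := by omega
      rw [Finset.sum_Ico_succ_top hk, mul_add]
      have hk0 : (0:ℝ) < k := by exact_mod_cast hk
      have h1 := key_lower p hp hp1 (k : ℝ) hk0
      have h2 := ih hk
      push_cast
      push_cast at h2
      nlinarith


lemma sum_upper' (p : ℝ) (hp : 0 < p) (hp1 : p < 1) (n : ℕ) (hn : 2 ≤ n) :
    p * ∑ m ∈ Finset.Ico 1 n, (m : ℝ) ^ (p - 1) ≤ ((n : ℝ) - 1) ^ p - 1 + p := by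
  induction n with
  | zero => omega
  | succ k ih =>
    rcases Nat.lt_or_ge k 2 with h | h
    · have hk : k = 1 := by omega
      subst hk
      norm_num
    · have hk1 : (1:ℝ) < k := by exact_mod_cast h
      have h1 := key_upper p hp hp1 (k : ℝ) hk1
      have h2 := ih h
      rw [Finset.sum_Ico_succ_top (by omega : 1 ≤ k), mul_add]
      push_cast
      push_cast at h2
      have e : ((k:ℝ) + 1 - 1) = (k:ℝ) := by ring
      rw [e]
      linarith

lemma sum_upper (p : ℝ) (hp : 0 < p) (hp1 : p < 1) (n : ℕ) (hn : 1 ≤ n) :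
    p * ∑ m ∈ Finset.Ico 1 n, (m : ℝ) ^ (p - 1) ≤ (n : ℝ) ^ p - 1 + p := by
  rcases Nat.lt_or_ge n 2 with h | h
  · have : n = 1 := by omega
    subst this
    simp
    exact hp.le
  · have h1 := sum_upper' p hp hp1 n h
    have h2 : ((n : ℝ) - 1) ^ p ≤ (n : ℝ) ^ p := by
      have h9 : (2:ℝ) ≤ n := by exact_mod_cast h
      exact Real.rpow_le_rpow (by linarith) (by linarith) hp.le
    linarith

/-- For `1/2 < H < 1`, `Δt = 1/N`, grid points `r = jΔt`, `t = KΔt` with `0 ≤ j < K`: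
the error `ε_N(r,t)` between the Riemann sum `∑_{s=r+Δt}^{t} (H-1/2)(s-r)^(H-3/2) Δt`
and the integral `∫_{r+Δt}^{t} (H-1/2)(s-r)^(H-3/2) ds` satisfies
`0 ≤ ε_N(r,t) ≤ (H-1/2)·Δt^(H-1/2)`. -/
theorem epsilon_error_bound (H : ℝ) (hH1 : 1/2 < H) (hH2 : H < 1)
    (N : ℕ) (hN : 0 < N) (j K : ℕ) (hjK : j < K) :
    let Δt : ℝ := 1 / N
    let r : ℝ := j * Δt
    let t : ℝ := K * Δt
    let ε : ℝ :=
      (∑ i ∈ Finset.Ico (j + 1) K, (H - 1/2) * ((i : ℝ) * Δt - r) ^ (H - 3/2) * Δt)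
        - ∫ s in (r + Δt)..t, (H - 1/2) * (s - r) ^ (H - 3/2)
    0 ≤ ε ∧ ε ≤ (H - 1/2) * Δt ^ (H - 1/2) := by
  intro Δt r t ε
  set p := H - 1/2 with hp_def
  have hp : 0 < p := by simp [hp_def]; linarith
  have hp1 : p < 1 := by simp [hp_def]; linarith
  have hexp : H - 3/2 = p - 1 := by rw [hp_def]; ring
  have hN' : (0:ℝ) < N := by exact_mod_cast hN
  have hΔt : 0 < Δt := by simp only [Δt]; positivity
  set n := K - j with hn_def
  have hn1 : 1 ≤ n := by omega
  have hKj : (K : ℝ) - j = (n : ℝ) := by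
    rw [hn_def]; push_cast [Nat.cast_sub hjK.le]; ring
  have hsum : (∑ i ∈ Finset.Ico (j + 1) K, (H - 1/2) * ((i : ℝ) * Δt - r) ^ (H - 3/2) * Δt)
      = Δt ^ p * (p * ∑ m ∈ Finset.Ico 1 n, (m : ℝ) ^ (p - 1)) := by
    rw [Finset.sum_Ico_eq_sum_range, Finset.sum_Ico_eq_sum_range,
      show K - (j + 1) = n - 1 by omega, Finset.mul_sum, Finset.mul_sum]
    apply Finset.sum_congr rfl
    intro k _
    have hb : ((j + 1 + k : ℕ) : ℝ) * Δt - r = ((1 + k : ℕ) : ℝ) * Δt := by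
      simp only [r]; push_cast; ring
    have hpos : (0:ℝ) ≤ ((1 + k : ℕ) : ℝ) := by positivity
    rw [hb, hexp, Real.mul_rpow hpos hΔt.le, ← hp_def]
    rw [show Δt ^ p = Δt ^ (p - 1) * Δt by
      rw [← Real.rpow_add_one hΔt.ne' (p - 1), sub_add_cancel]]
    ring
  have hint : (∫ s in (r + Δt)..t, (H - 1/2) * (s - r) ^ (H - 3/2))
      = ((n : ℝ) * Δt) ^ p - Δt ^ p := by
    calc (∫ s in (r + Δt)..t, (H - 1/2) * (s - r) ^ (H - 3/2))
        = ∫ s in (r + Δt)..t, (fun u => p * u ^ (p - 1)) (s - r) := by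
          apply intervalIntegral.integral_congr
          intro s _
          simp only [hexp, hp_def]
      _ = ∫ u in (r + Δt - r)..(t - r), p * u ^ (p - 1) :=
          intervalIntegral.integral_comp_sub_right (fun u => p * u ^ (p - 1)) r
      _ = (t - r) ^ p - (r + Δt - r) ^ p := int_pow_eq p hp _ _
      _ = ((n : ℝ) * Δt) ^ p - Δt ^ p := by
          congr 1
          · congr 1
            show (K : ℝ) * Δt - (j : ℝ) * Δt = (n : ℝ) * Δt
            rw [← hKj]; ring
          · congr 1; ring
  have hε : ε = Δt ^ p * (p * ∑ m ∈ Finset.Ico 1 n, (m : ℝ) ^ (p - 1))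
      - (((n : ℝ)) ^ p * Δt ^ p - Δt ^ p) := by
    show _ - _ = _
    rw [hsum, hint, Real.mul_rpow (by positivity) hΔt.le]
  have hlow := sum_lower p hp hp1 n hn1
  have hup := sum_upper p hp hp1 n hn1
  have hΔp : 0 < Δt ^ p := Real.rpow_pos_of_pos hΔt p
  constructor
  · rw [hε]; nlinarith [mul_le_mul_of_nonneg_left hlow hΔp.le]
  · rw [hε]; nlinarith [mul_le_mul_of_nonneg_left hup hΔp.le]
end

section
/- (Lemma 1(i)) Let 1/2 < H < 1, let N be a positive integer with Δt = 1/N, and let t = KΔt with integer K ≥ 1. Let (ω_j)_{j=0}^{K−1} be independent Rademacher random variables on a probability space (Ω, P). Then E[( ∑_{j=0}^{K−1} ε_N(jΔt, t) · √Δt · ω_j )²] ≤ (H−1/2)² · t · Δt^(2H−1). -/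
open MeasureTheory ProbabilityTheory intervalIntegral

section Aux
variable {Ω : Type*} [MeasurableSpace Ω] {P : Measure Ω} [IsProbabilityMeasure P]


variable {Ω : Type*} [MeasurableSpace Ω] {P : Measure Ω} [IsProbabilityMeasure P]

lemma rademacher_ae {f : Ω → ℝ} (hf : Measurable f)
    (h1 : P {x | f x = 1} = 1/2) (h2 : P {x | f x = -1} = 1/2) :
    ∀ᵐ x ∂P, f x = 1 ∨ f x = -1 := by
  have hs1 : MeasurableSet {x | f x = 1} := hf (measurableSet_singleton 1)
  have hs2 : MeasurableSet {x | f x = -1} := hf (measurableSet_singleton (-1))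
  have hd : Disjoint {x | f x = 1} {x | f x = -1} := by
    rw [Set.disjoint_left]; intro x hx hx'
    simp only [Set.mem_setOf_eq] at hx hx'; rw [hx] at hx'; norm_num at hx'
  have hu : P ({x | f x = 1} ∪ {x | f x = -1}) = 1 := by
    rw [measure_union hd hs2, h1, h2]
    rw [ENNReal.div_add_div_same, one_add_one_eq_two, ENNReal.div_self two_ne_zero ENNReal.ofNat_ne_top]
  rw [ae_iff]
  have he : {x | ¬(f x = 1 ∨ f x = -1)} = ({x | f x = 1} ∪ {x | f x = -1})ᶜ := by
    ext x; simp [not_or]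
  rw [he, measure_compl (hs1.union hs2) (measure_ne_top _ _), hu, measure_univ, tsub_self]

lemma rademacher_memℒp {f : Ω → ℝ} (hf : Measurable f)
    (h1 : P {x | f x = 1} = 1/2) (h2 : P {x | f x = -1} = 1/2) : MemLp f 2 P := by
  refine MemLp.of_bound hf.aestronglyMeasurable 1 ?_
  filter_upwards [rademacher_ae hf h1 h2] with x hx
  rcases hx with h | h <;> simp [h]

lemma rademacher_integral {f : Ω → ℝ} (hf : Measurable f)
    (h1 : P {x | f x = 1} = 1/2) (h2 : P {x | f x = -1} = 1/2) : ∫ x, f x ∂P = 0 := by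
  have hs1 : MeasurableSet {x | f x = 1} := hf (measurableSet_singleton 1)
  have hs2 : MeasurableSet {x | f x = -1} := hf (measurableSet_singleton (-1))
  have hcong : f =ᵐ[P] fun x => Set.indicator {x | f x = 1} (fun _ => (1:ℝ)) x
      - Set.indicator {x | f x = -1} (fun _ => (1:ℝ)) x := by
    filter_upwards [rademacher_ae hf h1 h2] with x hx
    rcases hx with h | h <;> simp [Set.indicator_apply, h] <;> norm_num
  rw [integral_congr_ae hcong, MeasureTheory.integral_sub, integral_indicator_const _ hs1,
    integral_indicator_const _ hs2, measureReal_def, h1, measureReal_def, h2]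
  · simp
  · exact (integrable_const (1:ℝ)).indicator hs1
  · exact (integrable_const (1:ℝ)).indicator hs2

lemma rademacher_variance {f : Ω → ℝ} (hf : Measurable f)
    (h1 : P {x | f x = 1} = 1/2) (h2 : P {x | f x = -1} = 1/2) : variance f P = 1 := by
  rw [variance_eq_sub (rademacher_memℒp hf h1 h2), rademacher_integral hf h1 h2]
  have : (fun x => (f ^ 2) x) =ᵐ[P] fun _ => (1:ℝ) := by
    filter_upwards [rademacher_ae hf h1 h2] with x hx
    rcases hx with h | h <;> simp [h]
  rw [show P[f ^ 2] = ∫ x, (f ^ 2) x ∂P from rfl, integral_congr_ae this]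
  simp

lemma rademacher_sum_sq (ω : ℕ → Ω → ℝ) (hmeas : ∀ j, Measurable (ω j))
    (hindep : iIndepFun ω P)
    (hdist : ∀ j, P {x | ω j x = 1} = 1/2 ∧ P {x | ω j x = -1} = 1/2)
    (c : ℕ → ℝ) (K : ℕ) :
    ∫ x, (∑ j ∈ Finset.range K, c j * ω j x) ^ 2 ∂P = ∑ j ∈ Finset.range K, (c j) ^ 2 := by
  set X : ℕ → Ω → ℝ := fun j => c j • ω j with hX
  have hmem : ∀ j, MemLp (X j) 2 P := fun j =>
    (rademacher_memℒp (hmeas j) (hdist j).1 (hdist j).2).const_smul (c j)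
  have hpair : Set.Pairwise ↑(Finset.range K) fun i j => IndepFun (X i) (X j) P := by
    intro i _ j _ hij
    exact (hindep.indepFun hij).comp (measurable_const_smul (c i)) (measurable_const_smul (c j))
  have hvar : variance (∑ j ∈ Finset.range K, X j) P = ∑ j ∈ Finset.range K, (c j) ^ 2 := by
    rw [IndepFun.variance_sum (fun j _ => hmem j) hpair]
    refine Finset.sum_congr rfl fun j _ => ?_
    rw [hX]
    simp only []
    rw [variance_smul, rademacher_variance (hmeas j) (hdist j).1 (hdist j).2, mul_one]
  have hSmem : MemLp (∑ j ∈ Finset.range K, X j) 2 P := memLp_finset_sum' _ fun j _ => hmem j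
  have hEzero : P[∑ j ∈ Finset.range K, X j] = 0 := by
    simp only [Finset.sum_apply]
    rw [MeasureTheory.integral_finset_sum]
    · refine Finset.sum_eq_zero fun j _ => ?_
      have : ∫ x, X j x ∂P = c j * ∫ x, ω j x ∂P := by
        simp only [hX, Pi.smul_apply, smul_eq_mul]
        exact integral_const_mul _ _
      rw [this, rademacher_integral (hmeas j) (hdist j).1 (hdist j).2, mul_zero]
    · exact fun j _ => (hmem j).integrable one_le_two
  have := variance_eq_sub hSmem
  rw [hvar, hEzero] at this
  have heq : ∫ x, (∑ j ∈ Finset.range K, c j * ω j x) ^ 2 ∂P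
      = P[(∑ j ∈ Finset.range K, X j) ^ 2] := by
    refine integral_congr_ae (Filter.Eventually.of_forall fun x => ?_)
    simp [hX, Finset.sum_apply]
  rw [heq]
  linarith [this]

end Aux


-- telescoping
lemma telescope_Ico (g : ℕ → ℝ) {m n : ℕ} (h : m ≤ n) :
    ∑ i ∈ Finset.Ico m n, (g i - g (i + 1)) = g m - g n := by
  induction n, h using Nat.le_induction with
  | base => simp
  | succ n hmn ih => rw [Finset.sum_Ico_succ_top hmn, ih]; ring

lemma eps_bound (H : ℝ) (hH1 : 1/2 < H) (hH2 : H < 1) (Δt : ℝ) (hΔt : 0 < Δt)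
    (j K : ℕ) (hjK : j < K) :
    0 ≤ (∑ i ∈ Finset.Ico (j + 1) K, (H - 1/2) * ((i : ℝ) * Δt - j * Δt) ^ (H - 3/2) * Δt)
        - (∫ s in ((j:ℝ) * Δt + Δt)..((K:ℝ) * Δt), (H - 1/2) * (s - j * Δt) ^ (H - 3/2)) ∧
    (∑ i ∈ Finset.Ico (j + 1) K, (H - 1/2) * ((i : ℝ) * Δt - j * Δt) ^ (H - 3/2) * Δt)
        - (∫ s in ((j:ℝ) * Δt + Δt)..((K:ℝ) * Δt), (H - 1/2) * (s - j * Δt) ^ (H - 3/2))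
      ≤ (H - 1/2) * Δt ^ (H - 1/2) := by
  have hH : (0:ℝ) ≤ H - 1/2 := by linarith
  have hexp : H - 3/2 ≤ 0 := by linarith
  set f : ℝ → ℝ := fun s => (H - 1/2) * (s - j * Δt) ^ (H - 3/2) with hf
  set a : ℕ → ℝ := fun i => i * Δt with ha
  -- basic facts
  have hmono : Monotone a := fun p q hpq => by
    simp only [ha]; exact mul_le_mul_of_nonneg_right (by exact_mod_cast hpq) hΔt.le
  have hpos : ∀ i : ℕ, j + 1 ≤ i → ∀ s ∈ Set.Icc (a i) (a (i+1)), 0 < s - j * Δt := by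
    intro i hi s hs
    have h1 : (j:ℝ) * Δt + Δt ≤ a i := by
      simp only [ha]
      have : ((j:ℝ) + 1) ≤ i := by exact_mod_cast hi
      nlinarith
    have := hs.1
    nlinarith
  -- integrability on subintervals
  have hint : ∀ i : ℕ, j + 1 ≤ i → IntervalIntegrable f volume (a i) (a (i+1)) := by
    intro i hi
    apply ContinuousOn.intervalIntegrable
    have huIcc : Set.uIcc (a i) (a (i+1)) = Set.Icc (a i) (a (i+1)) :=
      Set.uIcc_of_le (hmono (Nat.le_succ i))
    rw [huIcc]
    refine ContinuousOn.mul continuousOn_const ?_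
    refine ContinuousOn.rpow_const ?_ fun s hs => Or.inl (ne_of_gt (hpos i hi s hs))
    exact (continuous_sub_right _).continuousOn
  -- split the integral
  have hsplit : (∫ s in ((j:ℝ) * Δt + Δt)..((K:ℝ) * Δt), f s)
      = ∑ i ∈ Finset.Ico (j + 1) K, ∫ s in (a i)..(a (i+1)), f s := by
    rw [sum_integral_adjacent_intervals_Ico (Nat.succ_le_of_lt hjK)
      (fun k hk => hint k hk.1)]
    congr 1
    simp only [ha]; push_cast; ring
  -- per-interval bounds
  have hlen : ∀ i : ℕ, a (i+1) - a i = Δt := by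
    intro i; simp only [ha]; push_cast; ring
  have hdecr : ∀ i : ℕ, j + 1 ≤ i → ∀ s ∈ Set.Icc (a i) (a (i+1)), f s ≤ f (a i) := by
    intro i hi s hs
    refine mul_le_mul_of_nonneg_left ?_ hH
    exact Real.rpow_le_rpow_of_nonpos (by have := hpos i hi (a i) ⟨le_refl _, hmono (Nat.le_succ i)⟩; linarith)
      (by linarith [hs.1]) hexp
  have hdecr' : ∀ i : ℕ, j + 1 ≤ i → ∀ s ∈ Set.Icc (a i) (a (i+1)), f (a (i+1)) ≤ f s := by
    intro i hi s hs
    refine mul_le_mul_of_nonneg_left ?_ hH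
    exact Real.rpow_le_rpow_of_nonpos (hpos i hi s hs) (by linarith [hs.2]) hexp
  have hub : ∀ i : ℕ, j + 1 ≤ i → (∫ s in (a i)..(a (i+1)), f s) ≤ f (a i) * Δt := by
    intro i hi
    have : (∫ s in (a i)..(a (i+1)), f s) ≤ ∫ _ in (a i)..(a (i+1)), f (a i) :=
      integral_mono_on (hmono (Nat.le_succ i)) (hint i hi) intervalIntegrable_const
        (hdecr i hi)
    rwa [intervalIntegral.integral_const, hlen i, smul_eq_mul, mul_comm] at this
  have hlb : ∀ i : ℕ, j + 1 ≤ i → f (a (i+1)) * Δt ≤ ∫ s in (a i)..(a (i+1)), f s := by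
    intro i hi
    have : (∫ _ in (a i)..(a (i+1)), f (a (i+1))) ≤ ∫ s in (a i)..(a (i+1)), f s :=
      integral_mono_on (hmono (Nat.le_succ i)) intervalIntegrable_const (hint i hi)
        (hdecr' i hi)
    rwa [intervalIntegral.integral_const, hlen i, smul_eq_mul, mul_comm] at this
  -- rewrite ε as a sum of per-interval errors
  have hsum : (∑ i ∈ Finset.Ico (j + 1) K, (H - 1/2) * ((i : ℝ) * Δt - j * Δt) ^ (H - 3/2) * Δt)
        - (∫ s in ((j:ℝ) * Δt + Δt)..((K:ℝ) * Δt), (H - 1/2) * (s - j * Δt) ^ (H - 3/2))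
      = ∑ i ∈ Finset.Ico (j + 1) K, (f (a i) * Δt - ∫ s in (a i)..(a (i+1)), f s) := by
    rw [show (∫ s in ((j:ℝ) * Δt + Δt)..((K:ℝ) * Δt), (H - 1/2) * (s - j * Δt) ^ (H - 3/2))
        = ∫ s in ((j:ℝ) * Δt + Δt)..((K:ℝ) * Δt), f s from rfl, hsplit,
      ← Finset.sum_sub_distrib]
  constructor
  · rw [hsum]
    refine Finset.sum_nonneg fun i hi => ?_
    have hi' := (Finset.mem_Ico.mp hi).1
    linarith [hub i hi']
  · rw [hsum]
    have hstep : ∀ i ∈ Finset.Ico (j+1) K,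
        f (a i) * Δt - (∫ s in (a i)..(a (i+1)), f s) ≤ f (a i) * Δt - f (a (i+1)) * Δt := by
      intro i hi
      have hi' := (Finset.mem_Ico.mp hi).1
      linarith [hlb i hi']
    calc ∑ i ∈ Finset.Ico (j + 1) K, (f (a i) * Δt - ∫ s in (a i)..(a (i+1)), f s)
        ≤ ∑ i ∈ Finset.Ico (j + 1) K, (f (a i) * Δt - f (a (i+1)) * Δt) :=
          Finset.sum_le_sum hstep
      _ = f (a (j+1)) * Δt - f (a K) * Δt := telescope_Ico (fun i => f (a i) * Δt) (Nat.succ_le_of_lt hjK)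
      _ ≤ f (a (j+1)) * Δt := by
          have hpK := hpos K (Nat.succ_le_of_lt hjK) (a K) ⟨le_refl _, hmono (Nat.le_succ K)⟩
          have h0 : 0 ≤ f (a K) := mul_nonneg hH (Real.rpow_nonneg hpK.le _)
          nlinarith [hΔt.le, h0]
      _ = (H - 1/2) * Δt ^ (H - 1/2) := by
          simp only [hf, ha]
          have harg : ((j:ℝ) + 1) * Δt - j * Δt = Δt := by ring
          push_cast
          rw [harg, mul_assoc, ← Real.rpow_add_one (ne_of_gt hΔt),
            show H - 3/2 + 1 = H - 1/2 by ring]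


/-- Lemma 1(i): for `1/2 < H < 1`, `Δt = 1/N`, `t = KΔt` with `K ≥ 1`, and independent
Rademacher random variables `ω_0, …, ω_{K-1}`,
`E[(∑_{j=0}^{K-1} ε_N(jΔt, t)·√Δt·ω_j)²] ≤ (H-1/2)²·t·Δt^(2H-1)`, where
`ε_N(r,t) = ∑_{s=r+Δt}^{t} (H-1/2)(s-r)^(H-3/2) Δt - ∫_{r+Δt}^{t} (H-1/2)(s-r)^(H-3/2) ds`. -/
theorem epsilon_variance_bound (H : ℝ) (hH1 : 1/2 < H) (hH2 : H < 1)
    (N : ℕ) (hN : 0 < N) (K : ℕ) (hK : 1 ≤ K)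
    {Ω : Type*} [MeasurableSpace Ω] (P : Measure Ω) [IsProbabilityMeasure P]
    (ω : ℕ → Ω → ℝ) (hmeas : ∀ j, Measurable (ω j))
    (hindep : iIndepFun ω P)
    (hdist : ∀ j, P {x | ω j x = 1} = 1/2 ∧ P {x | ω j x = -1} = 1/2) :
    let Δt : ℝ := 1 / N
    let t : ℝ := K * Δt
    let ε : ℕ → ℝ := fun j =>
      (∑ i ∈ Finset.Ico (j + 1) K, (H - 1/2) * ((i : ℝ) * Δt - j * Δt) ^ (H - 3/2) * Δt)
        - ∫ s in (j * Δt + Δt)..t, (H - 1/2) * (s - j * Δt) ^ (H - 3/2)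
    (∫ x, (∑ j ∈ Finset.range K, ε j * Real.sqrt Δt * ω j x) ^ 2 ∂P)
      ≤ (H - 1/2) ^ 2 * t * Δt ^ (2 * H - 1) := by
  intro Δt t ε
  have hΔt : (0:ℝ) < Δt := by
    show (0:ℝ) < 1 / N
    positivity
  have hsum := rademacher_sum_sq (P := P) ω hmeas hindep hdist
    (fun j => ε j * Real.sqrt Δt) K
  have key : ∀ j ∈ Finset.range K,
      (ε j * Real.sqrt Δt) ^ 2 ≤ (H - 1/2) ^ 2 * Δt ^ (2 * H - 1) * Δt := by
    intro j hj
    obtain ⟨h0, h1⟩ := eps_bound H hH1 hH2 Δt hΔt j K (Finset.mem_range.mp hj)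
    have h0' : 0 ≤ ε j := h0
    have h1' : ε j ≤ (H - 1/2) * Δt ^ (H - 1/2) := h1
    have hsq : (ε j) ^ 2 ≤ ((H - 1/2) * Δt ^ (H - 1/2)) ^ 2 := pow_le_pow_left₀ h0' h1' 2
    have hrpow : (Δt ^ (H - 1/2)) ^ 2 = Δt ^ (2 * H - 1) := by
      rw [← Real.rpow_natCast (Δt ^ (H - 1/2)) 2, ← Real.rpow_mul hΔt.le]
      norm_num; ring_nf
    calc (ε j * Real.sqrt Δt) ^ 2 = (ε j) ^ 2 * Δt := by
          rw [mul_pow, Real.sq_sqrt hΔt.le]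
      _ ≤ ((H - 1/2) * Δt ^ (H - 1/2)) ^ 2 * Δt := by
          exact mul_le_mul_of_nonneg_right hsq hΔt.le
      _ = (H - 1/2) ^ 2 * Δt ^ (2 * H - 1) * Δt := by rw [mul_pow, hrpow]
  calc (∫ x, (∑ j ∈ Finset.range K, ε j * Real.sqrt Δt * ω j x) ^ 2 ∂P)
      = ∑ j ∈ Finset.range K, (ε j * Real.sqrt Δt) ^ 2 := hsum
    _ ≤ ∑ _j ∈ Finset.range K, (H - 1/2) ^ 2 * Δt ^ (2 * H - 1) * Δt :=
        Finset.sum_le_sum key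
    _ = K * ((H - 1/2) ^ 2 * Δt ^ (2 * H - 1) * Δt) := by
        rw [Finset.sum_const, Finset.card_range, nsmul_eq_mul]
    _ = (H - 1/2) ^ 2 * t * Δt ^ (2 * H - 1) := by
        show _ = (H - 1/2) ^ 2 * ((K:ℝ) * Δt) * Δt ^ (2 * H - 1)
        ring
end

section
/- (Lemma 1(ii), deterministic form) Let 1/2 < H < 1, let N be a positive integer with Δt = 1/N, and let t = KΔt with integer K ≥ 1. Then the series ∑_{k=1}^∞ δ_N(−kΔt, t)² · Δt converges and its sum is at most (H−1/2)² · ζ(3−2H) · Δt^(2H). (This sum equals the variance of ∑_{r=−∞}^{0} δ_N(r,t)ΔB_r for Rademacher increments ΔB_r of size √Δt.) -/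
open MeasureTheory

/-- The Riemann zeta function for real `s`, `ζ(s) = ∑_{n=1}^∞ n^(-s)` (for `s > 1`). -/
noncomputable def realZeta (s : ℝ) : ℝ := ∑' n : ℕ, ((n : ℝ) + 1) ^ (-s)

/-- Lemma 1(ii), deterministic form: for `1/2 < H < 1`, `Δt = 1/N`, `t = KΔt` with `K ≥ 1`,
the series `∑_{k=1}^∞ δ_N(-kΔt, t)²·Δt` converges, with sum at most
`(H-1/2)²·ζ(3-2H)·Δt^(2H)`, where
`δ_N(r,t) = ∑_{s=0}^{t} (H-1/2)(s-r)^(H-3/2) Δt - ∫_0^t (H-1/2)(s-r)^(H-3/2) ds`. -/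
theorem delta_variance_bound (H : ℝ) (hH1 : 1/2 < H) (hH2 : H < 1)
    (N : ℕ) (hN : 0 < N) (K : ℕ) (hK : 1 ≤ K) :
    let Δt : ℝ := 1 / N
    let t : ℝ := K * Δt
    let δ : ℕ → ℝ := fun k =>
      (∑ i ∈ Finset.range K, (H - 1/2) * ((i : ℝ) * Δt - (-(k * Δt))) ^ (H - 3/2) * Δt)
        - ∫ s in (0 : ℝ)..t, (H - 1/2) * (s - (-(k * Δt))) ^ (H - 3/2)
    Summable (fun k : ℕ => (δ (k + 1)) ^ 2 * Δt) ∧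
    (∑' k : ℕ, (δ (k + 1)) ^ 2 * Δt)
      ≤ (H - 1/2) ^ 2 * realZeta (3 - 2 * H) * Δt ^ (2 * H) := by
  intro Δt t δ
  have hΔt : 0 < Δt := by
    have : (0:ℝ) < N := by exact_mod_cast hN
    positivity
  set c : ℝ := H - 1/2 with hc_def
  have hc : 0 < c := by simp [hc_def]; linarith
  set e : ℝ := H - 3/2 with he_def
  have he : e < 0 := by simp [he_def]; linarith
  -- bound on δ k for k ≥ 1
  have hδ_bound : ∀ k : ℕ, 0 < k → 0 ≤ δ k ∧ δ k ≤ c * Δt * ((k : ℝ) * Δt) ^ e := by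
    intro k hk
    have hkΔ : 0 < (k : ℝ) * Δt := by
      have : (0:ℝ) < k := by exact_mod_cast hk
      positivity
    set f : ℝ → ℝ := fun s => c * (s + (k : ℝ) * Δt) ^ e with hf_def
    have hcont : ContinuousOn f (Set.Ici (0:ℝ)) := by
      apply ContinuousOn.mul continuousOn_const
      apply ContinuousOn.rpow_const
      · exact (continuous_id.add continuous_const).continuousOn
      · intro x hx
        left
        have : (0:ℝ) < x + (k:ℝ) * Δt := by
          have : (0:ℝ) ≤ x := hx
          linarith
        linarith
    have hintg : ∀ a b : ℝ, 0 ≤ a → 0 ≤ b → IntervalIntegrable f volume a b := by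
      intro a b ha hb
      apply ContinuousOn.intervalIntegrable
      apply hcont.mono
      intro x hx
      rcases le_total a b with h | h
      · rw [Set.uIcc_of_le h] at hx; exact le_trans ha hx.1
      · rw [Set.uIcc_of_ge h] at hx; exact le_trans hb hx.1
    -- split the integral
    have hgrid : ∀ i : ℕ, (0:ℝ) ≤ (i:ℝ) * Δt := fun i => by positivity
    have hint' : ∀ i < K, IntervalIntegrable f volume ((i:ℝ) * Δt) (((i+1:ℕ):ℝ) * Δt) :=
      fun i _ => hintg _ _ (hgrid i) (hgrid (i+1))
    have hsplit : (∫ s in (0:ℝ)..t, f s)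
        = ∑ i ∈ Finset.range K, ∫ s in ((i:ℝ) * Δt)..(((i:ℝ)+1) * Δt), f s := by
      calc (∫ s in (0:ℝ)..t, f s)
          = ∫ s in (((0:ℕ):ℝ) * Δt)..(((K:ℕ):ℝ) * Δt), f s := by norm_num [t]
        _ = ∑ i ∈ Finset.range K, ∫ s in ((i:ℝ) * Δt)..(((i+1:ℕ):ℝ) * Δt), f s :=
            (intervalIntegral.sum_integral_adjacent_intervals
              (a := fun i : ℕ => (i:ℝ) * Δt) hint').symm
        _ = ∑ i ∈ Finset.range K, ∫ s in ((i:ℝ) * Δt)..(((i:ℝ)+1) * Δt), f s := by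
            apply Finset.sum_congr rfl
            intro i _
            congr 1
            push_cast
            ring
    have hδ_eq : δ k = ∑ i ∈ Finset.range K,
        (c * ((i:ℝ) * Δt + (k:ℝ) * Δt) ^ e * Δt
          - ∫ s in ((i:ℝ) * Δt)..(((i:ℝ)+1) * Δt), f s) := by
      rw [Finset.sum_sub_distrib, ← hsplit]
      simp only [δ, sub_neg_eq_add, f]
      rfl
    -- per-interval bounds
    have hterm : ∀ i : ℕ,
        0 ≤ c * ((i:ℝ) * Δt + (k:ℝ) * Δt) ^ e * Δt
            - ∫ s in ((i:ℝ) * Δt)..(((i:ℝ)+1) * Δt), f s ∧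
        c * ((i:ℝ) * Δt + (k:ℝ) * Δt) ^ e * Δt
            - ∫ s in ((i:ℝ) * Δt)..(((i:ℝ)+1) * Δt), f s
          ≤ c * Δt * (((i:ℝ) * Δt + (k:ℝ) * Δt) ^ e
              - (((i:ℝ)+1) * Δt + (k:ℝ) * Δt) ^ e) := by
      intro i
      have hab : (i:ℝ) * Δt ≤ ((i:ℝ)+1) * Δt := by nlinarith [hΔt]
      have hintgr := hintg ((i:ℝ) * Δt) (((i:ℝ)+1) * Δt) (hgrid i) (by positivity)
      have hupper : (∫ s in ((i:ℝ) * Δt)..(((i:ℝ)+1) * Δt), f s)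
          ≤ c * ((i:ℝ) * Δt + (k:ℝ) * Δt) ^ e * Δt := by
        have := intervalIntegral.integral_mono_on (μ := volume) hab hintgr
          (intervalIntegrable_const (c := c * ((i:ℝ) * Δt + (k:ℝ) * Δt) ^ e))
          (fun x hx => by
            have hx1 : (i:ℝ) * Δt ≤ x := hx.1
            have hpos : (0:ℝ) < (i:ℝ) * Δt + (k:ℝ) * Δt := by
              have := hgrid i; linarith
            have : (x + (k:ℝ) * Δt) ^ e ≤ ((i:ℝ) * Δt + (k:ℝ) * Δt) ^ e :=
              Real.rpow_le_rpow_of_nonpos hpos (by linarith) he.le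
            exact mul_le_mul_of_nonneg_left this hc.le)
        have hd : ((i:ℝ)+1) * Δt - (i:ℝ) * Δt = Δt := by ring
        rw [intervalIntegral.integral_const, smul_eq_mul, hd] at this
        linarith
      have hlower : c * (((i:ℝ)+1) * Δt + (k:ℝ) * Δt) ^ e * Δt
          ≤ ∫ s in ((i:ℝ) * Δt)..(((i:ℝ)+1) * Δt), f s := by
        have := intervalIntegral.integral_mono_on (μ := volume) hab
          (intervalIntegrable_const (c := c * (((i:ℝ)+1) * Δt + (k:ℝ) * Δt) ^ e))
          hintgr
          (fun x hx => by
            have hx2 : x ≤ ((i:ℝ)+1) * Δt := hx.2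
            have hpos : (0:ℝ) < x + (k:ℝ) * Δt := by
              have hx1 : (i:ℝ) * Δt ≤ x := hx.1
              have := hgrid i; linarith
            have : (((i:ℝ)+1) * Δt + (k:ℝ) * Δt) ^ e ≤ (x + (k:ℝ) * Δt) ^ e :=
              Real.rpow_le_rpow_of_nonpos hpos (by linarith) he.le
            exact mul_le_mul_of_nonneg_left this hc.le)
        have hd : ((i:ℝ)+1) * Δt - (i:ℝ) * Δt = Δt := by ring
        rw [intervalIntegral.integral_const, smul_eq_mul, hd] at this
        linarith
      constructor
      · linarith
      · have : c * Δt * (((i:ℝ) * Δt + (k:ℝ) * Δt) ^ e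
            - (((i:ℝ)+1) * Δt + (k:ℝ) * Δt) ^ e)
            = c * ((i:ℝ) * Δt + (k:ℝ) * Δt) ^ e * Δt
              - c * (((i:ℝ)+1) * Δt + (k:ℝ) * Δt) ^ e * Δt := by ring
        linarith
    constructor
    · rw [hδ_eq]
      exact Finset.sum_nonneg fun i _ => (hterm i).1
    · rw [hδ_eq]
      calc ∑ i ∈ Finset.range K, _
          ≤ ∑ i ∈ Finset.range K, (c * Δt * (((i:ℝ) * Δt + (k:ℝ) * Δt) ^ e
              - (((i:ℝ)+1) * Δt + (k:ℝ) * Δt) ^ e)) :=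
            Finset.sum_le_sum fun i _ => (hterm i).2
        _ = ∑ i ∈ Finset.range K, ((fun j : ℕ => c * Δt * (((j:ℝ) * Δt + (k:ℝ) * Δt) ^ e)) i
              - (fun j : ℕ => c * Δt * (((j:ℝ) * Δt + (k:ℝ) * Δt) ^ e)) (i+1)) := by
            apply Finset.sum_congr rfl
            intro i _
            push_cast
            ring
        _ = c * Δt * (((0:ℝ) * Δt + (k:ℝ) * Δt) ^ e)
              - c * Δt * (((K:ℝ) * Δt + (k:ℝ) * Δt) ^ e) := by
            rw [Finset.sum_range_sub']
            norm_num
        _ ≤ c * Δt * ((k:ℝ) * Δt) ^ e := by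
            have h1 : (0:ℝ) * Δt + (k:ℝ) * Δt = (k:ℝ) * Δt := by ring
            rw [h1]
            have : 0 ≤ c * Δt * (((K:ℝ) * Δt + (k:ℝ) * Δt) ^ e) := by positivity
            linarith
  -- pointwise bound on the summand
  have hpt : ∀ k : ℕ, (δ (k+1))^2 * Δt
      ≤ c^2 * (((k:ℝ)+1) ^ (-(3 - 2*H)) * Δt ^ (2*H)) := by
    intro k
    obtain ⟨h0, h1⟩ := hδ_bound (k+1) (Nat.succ_pos k)
    have hcast : ((k+1 : ℕ) : ℝ) = (k:ℝ) + 1 := by push_cast; ring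
    rw [hcast] at h1
    have hsq : (δ (k+1))^2 ≤ (c * Δt * (((k:ℝ)+1) * Δt) ^ e)^2 := by
      apply sq_le_sq' <;> nlinarith
    have hbase : (0:ℝ) < ((k:ℝ)+1) := by positivity
    have hrw : (c * Δt * (((k:ℝ)+1) * Δt) ^ e)^2 * Δt
        = c^2 * (((k:ℝ)+1) ^ (-(3 - 2*H)) * Δt ^ (2*H)) := by
      rw [Real.mul_rpow hbase.le hΔt.le, mul_pow, mul_pow, mul_pow,
        ← Real.rpow_natCast (((k:ℝ)+1) ^ e) 2, ← Real.rpow_natCast (Δt ^ e) 2,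
        ← Real.rpow_mul hbase.le, ← Real.rpow_mul hΔt.le]
      have he2 : e * ((2:ℕ):ℝ) = -(3 - 2*H) := by simp [he_def]; ring
      rw [he2]
      have hΔpow : Δt ^ (2:ℕ) * (Δt ^ (-(3 - 2*H)) * Δt)
          = Δt ^ (2*H) := by
        have h3 : (2:ℝ) * H = (-(3 - 2*H)) + (3:ℕ) := by push_cast; ring
        rw [h3, Real.rpow_add_natCast hΔt.ne' (-(3 - 2*H)) 3]
        ring_nf
      calc (c ^ (2:ℕ)) * Δt ^ (2:ℕ) * (((k:ℝ)+1) ^ (-(3 - 2*H)) * Δt ^ (-(3 - 2*H))) * Δt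
          = c^2 * (((k:ℝ)+1) ^ (-(3 - 2*H)) * (Δt ^ (2:ℕ) * (Δt ^ (-(3 - 2*H)) * Δt))) := by
            ring
        _ = _ := by rw [hΔpow]
    calc (δ (k+1))^2 * Δt ≤ (c * Δt * (((k:ℝ)+1) * Δt) ^ e)^2 * Δt :=
          mul_le_mul_of_nonneg_right hsq hΔt.le
      _ = _ := hrw
  have hnonneg : ∀ k : ℕ, 0 ≤ (δ (k+1))^2 * Δt := fun k => by positivity
  have hsummable_zeta : Summable (fun k : ℕ => ((k:ℝ)+1) ^ (-(3 - 2*H))) := by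
    have : Summable (fun n : ℕ => (n:ℝ) ^ (-(3 - 2*H))) := by
      rw [Real.summable_nat_rpow]
      linarith
    have h := (summable_nat_add_iff 1).mpr this
    simpa [add_comm] using h
  have hsummable_b : Summable (fun k : ℕ =>
      c^2 * (((k:ℝ)+1) ^ (-(3 - 2*H)) * Δt ^ (2*H))) :=
    ((hsummable_zeta.mul_right (Δt ^ (2*H))).mul_left (c^2))
  have hsum : Summable (fun k : ℕ => (δ (k + 1)) ^ 2 * Δt) :=
    Summable.of_nonneg_of_le hnonneg hpt hsummable_b
  refine ⟨hsum, ?_⟩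
  calc (∑' k : ℕ, (δ (k + 1)) ^ 2 * Δt)
      ≤ ∑' k : ℕ, c^2 * (((k:ℝ)+1) ^ (-(3 - 2*H)) * Δt ^ (2*H)) :=
        Summable.tsum_le_tsum hpt hsum hsummable_b
    _ = c^2 * realZeta (3 - 2*H) * Δt ^ (2*H) := by
        rw [tsum_mul_left, realZeta]
        rw [tsum_mul_right]
        ring
end

section
/- (Lemma 2, ε̃-part) Let 0 < H < 1/2, let N be a positive integer with Δt = 1/N, and let t = KΔt with integer K ≥ 1. Then ∑_{j=0}^{K−1} ε̃_N(jΔt, t) ≤ −(H−1/2)·ζ(3/2−H)·Δt^(H−1/2). Consequently, for any real numbers b_0, …, b_{K−1} with |b_j| ≤ √Δt for all j, | ∑_{j=0}^{K−1} ε̃_N(jΔt, t)·b_j | ≤ −(H−1/2)·ζ(3/2−H)·Δt^H. -/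
open MeasureTheory

open Set

lemma riemann_tail_bounds {p d x0 : ℝ} (hp : p < -1) (hd : 0 < d) (hx0 : 0 < x0) :
    Summable (fun m : ℕ => (x0 + m * d) ^ p * d) ∧
    (∫ u in Set.Ioi x0, u ^ p) ≤ (∑' m : ℕ, (x0 + m * d) ^ p * d) ∧
    (∑' m : ℕ, (x0 + m * d) ^ p * d) ≤ (∫ u in Set.Ioi x0, u ^ p) + x0 ^ p * d := by
  set a : ℕ → ℝ := fun m => x0 + m * d with ha_def
  have ha_pos : ∀ m : ℕ, 0 < a m := fun m => by
    have : (0:ℝ) ≤ m * d := by positivity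
    simp only [ha_def]; linarith
  have ha_mono : ∀ {i j : ℕ}, i ≤ j → a i ≤ a j := by
    intro i j hij
    have : (i:ℝ) ≤ j := Nat.cast_le.2 hij
    simp only [ha_def]; nlinarith
  set s : ℕ → Set ℝ := fun m => Ioc (a m) (a (m + 1)) with hs_def
  have hu : (⋃ m, s m) = Ioi x0 := by
    ext u
    simp only [hs_def, mem_iUnion, mem_Ioc, mem_Ioi]
    constructor
    · rintro ⟨m, h1, _⟩
      have hx0a : a 0 = x0 := by simp [ha_def]
      have : x0 ≤ a m := hx0a ▸ ha_mono (Nat.zero_le m)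
      linarith
    · intro hu
      set n := ⌈(u - x0) / d⌉₊ with hn_def
      have hpos : 0 < (u - x0) / d := div_pos (by linarith) hd
      have hn1 : 0 < n := Nat.ceil_pos.2 hpos
      refine ⟨n - 1, ?_, ?_⟩
      · have hlt : ((n - 1 : ℕ) : ℝ) < (u - x0) / d := by
          rw [← Nat.lt_ceil]; omega
        have := (lt_div_iff₀ hd).1 hlt
        simp only [ha_def]; linarith
      · have hle : (u - x0) / d ≤ n := Nat.le_ceil _
        have := (div_le_iff₀ hd).1 hle
        have hnn : (n - 1) + 1 = n := by omega
        rw [hnn]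
        simp only [ha_def]; linarith
  have hdisj : Pairwise (Function.onFun Disjoint s) := by
    intro m n hmn
    rcases hmn.lt_or_gt with h | h
    · exact Set.Ioc_disjoint_Ioc.2 (le_trans (min_le_left _ _) (le_trans (ha_mono h) (le_max_right _ _)))
    · exact Set.Ioc_disjoint_Ioc.2 (le_trans (min_le_right _ _) (le_trans (ha_mono h) (le_max_left _ _)))
  have hint : IntegrableOn (fun u : ℝ => u ^ p) (Ioi x0) := integrableOn_Ioi_rpow_of_lt hp hx0
  have hintU : IntegrableOn (fun u : ℝ => u ^ p) (⋃ m, s m) := by rw [hu]; exact hint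
  have hSum : HasSum (fun m => ∫ u in s m, u ^ p) (∫ u in Ioi x0, u ^ p) := by
    have := hasSum_integral_iUnion (μ := volume) (f := fun u : ℝ => u ^ p)
      (fun m => measurableSet_Ioc) hdisj hintU
    rwa [hu] at this
  have hsub : ∀ m : ℕ, s m ⊆ Ioi x0 := by
    intro m u hu'
    rw [← hu]; exact mem_iUnion.2 ⟨m, hu'⟩
  have hvol : ∀ m : ℕ, (volume (s m)).toReal = d := by
    intro m
    have : a (m + 1) - a m = d := by simp only [ha_def]; push_cast; ring
    simp [hs_def, Real.volume_Ioc, this, hd.le]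
  have hupper : ∀ m : ℕ, (∫ u in s m, u ^ p) ≤ a m ^ p * d := by
    intro m
    have h1 : (∫ u in s m, u ^ p) ≤ ∫ _ in s m, a m ^ p := by
      refine setIntegral_mono_on (hint.mono_set (hsub m)) (integrableOn_const ?_)
        measurableSet_Ioc ?_
      · simp [hs_def, Real.volume_Ioc]
      · intro u hu'
        exact Real.rpow_le_rpow_of_nonpos (ha_pos m) hu'.1.le (by linarith)
    have h2 : (∫ _ in s m, a m ^ p : ℝ) = a m ^ p * d := by
      rw [setIntegral_const, measureReal_def, hvol m, smul_eq_mul, mul_comm]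
    linarith
  have hlower : ∀ m : ℕ, a (m + 1) ^ p * d ≤ ∫ u in s m, u ^ p := by
    intro m
    have h1 : (∫ _ in s m, a (m + 1) ^ p : ℝ) ≤ ∫ u in s m, u ^ p := by
      refine setIntegral_mono_on (integrableOn_const ?_) (hint.mono_set (hsub m))
        measurableSet_Ioc ?_
      · simp [hs_def, Real.volume_Ioc]
      · intro u hu'
        exact Real.rpow_le_rpow_of_nonpos (lt_of_lt_of_le (ha_pos m) hu'.1.le) hu'.2 (by linarith)
    have h2 : (∫ _ in s m, a (m + 1) ^ p : ℝ) = a (m + 1) ^ p * d := by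
      rw [setIntegral_const, measureReal_def, hvol m, smul_eq_mul, mul_comm]
    linarith
  have hterm_nonneg : ∀ m : ℕ, 0 ≤ a m ^ p * d := fun m => by positivity
  have hshift_summ : Summable (fun m : ℕ => a (m + 1) ^ p * d) :=
    Summable.of_nonneg_of_le (fun m => hterm_nonneg (m + 1)) hlower hSum.summable
  have hS : Summable (fun m : ℕ => a m ^ p * d) := by
    rwa [← summable_nat_add_iff 1]
  refine ⟨hS, ?_, ?_⟩
  · rw [← hSum.tsum_eq]
    exact Summable.tsum_le_tsum hupper hSum.summable hS
  · have hsplit : (∑' m : ℕ, a m ^ p * d) = a 0 ^ p * d + ∑' m : ℕ, a (m + 1) ^ p * d :=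
      Summable.tsum_eq_zero_add hS
    have htail : (∑' m : ℕ, a (m + 1) ^ p * d) ≤ ∫ u in Ioi x0, u ^ p := by
      rw [← hSum.tsum_eq]
      exact Summable.tsum_le_tsum hlower hshift_summ hSum.summable
    have ha0 : a 0 = x0 := by simp [ha_def]
    rw [hsplit, ha0]
    linarith

/-- Lemma 2, ε̃-part: for `0 < H < 1/2`, `Δt = 1/N`, `t = KΔt` with `K ≥ 1`,
`∑_{j=0}^{K-1} ε̃_N(jΔt, t) ≤ -(H-1/2)·ζ(3/2-H)·Δt^(H-1/2)`, and for any reals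
`b_0, …, b_{K-1}` with `|b_j| ≤ √Δt`,
`|∑_{j=0}^{K-1} ε̃_N(jΔt, t)·b_j| ≤ -(H-1/2)·ζ(3/2-H)·Δt^H`. Here
`ε̃_N(r,t) = ∑_{s=t}^{∞} -(H-1/2)(s-r)^(H-3/2) Δt - ∫_t^∞ -(H-1/2)(s-r)^(H-3/2) ds`. -/
theorem tilde_epsilon_sum_bound (H : ℝ) (hH0 : 0 < H) (hH : H < 1/2)
    (N : ℕ) (hN : 0 < N) (K : ℕ) (hK : 1 ≤ K) :
    let Δt : ℝ := 1 / N
    let t : ℝ := K * Δt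
    let ε : ℕ → ℝ := fun j =>
      (∑' m : ℕ, -(H - 1/2) * (((K + m : ℕ) : ℝ) * Δt - j * Δt) ^ (H - 3/2) * Δt)
        - ∫ s in Set.Ioi t, -(H - 1/2) * (s - j * Δt) ^ (H - 3/2)
    (∑ j ∈ Finset.range K, ε j) ≤ -(H - 1/2) * realZeta (3/2 - H) * Δt ^ (H - 1/2) ∧
    ∀ b : ℕ → ℝ, (∀ j < K, |b j| ≤ Real.sqrt Δt) →
      |∑ j ∈ Finset.range K, ε j * b j| ≤ -(H - 1/2) * realZeta (3/2 - H) * Δt ^ H := by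
  intro Δt t ε
  have hΔt : 0 < Δt := by
    have : (0:ℝ) < N := Nat.cast_pos.2 hN
    positivity
  set p : ℝ := H - 3/2 with hp_def
  have hp : p < -1 := by rw [hp_def]; linarith
  set c : ℝ := -(H - 1/2) with hc_def
  have hc : 0 < c := by rw [hc_def]; linarith
  set x0 : ℕ → ℝ := fun j => ((K - j : ℕ) : ℝ) * Δt with hx0_def
  have hx0pos : ∀ j < K, 0 < x0 j := by
    intro j hj
    have : 0 < K - j := by omega
    have : (0:ℝ) < ((K - j : ℕ) : ℝ) := Nat.cast_pos.2 this
    simp only [hx0_def]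
    positivity
  -- rewrite ε j
  have hε : ∀ j < K, ε j =
      c * ((∑' m : ℕ, (x0 j + m * Δt) ^ p * Δt) - ∫ u in Set.Ioi (x0 j), u ^ p) := by
    intro j hj
    have hjK : j ≤ K := hj.le
    have hbase : ∀ m : ℕ, ((K + m : ℕ) : ℝ) * Δt - j * Δt = x0 j + m * Δt := by
      intro m
      simp only [hx0_def, Nat.cast_sub hjK, Nat.cast_add]
      ring
    have h1 : (∑' m : ℕ, -(H - 1/2) * (((K + m : ℕ) : ℝ) * Δt - j * Δt) ^ (H - 3/2) * Δt)
        = c * ∑' m : ℕ, (x0 j + m * Δt) ^ p * Δt := by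
      rw [← tsum_mul_left]
      exact tsum_congr fun m => by rw [hbase m, hc_def, hp_def]; ring
    have h2 : (∫ s in Set.Ioi t, -(H - 1/2) * (s - j * Δt) ^ (H - 3/2))
        = c * ∫ u in Set.Ioi (x0 j), u ^ p := by
      rw [integral_const_mul]
      congr 1
      have htr : ∫ u in ((· + (j * Δt)) ⁻¹' Set.Ioi t), ((u + j * Δt) - j * Δt) ^ p
          = ∫ s in Set.Ioi t, (s - j * Δt) ^ p :=
        (measurePreserving_add_right volume (j * Δt)).setIntegral_preimage_emb
          (MeasurableEquiv.addRight (j * Δt)).measurableEmbedding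
          (fun s => (s - j * Δt) ^ p) (Set.Ioi t)
      have hpre : ((· + (j * Δt)) ⁻¹' Set.Ioi t) = Set.Ioi (x0 j) := by
        rw [Set.preimage_add_const_Ioi]
        congr 1
        simp only [hx0_def, Nat.cast_sub hjK, t]
        ring
      rw [← htr, hpre]
      simp
    show _ - _ = _
    rw [h1, h2, mul_sub]
  -- bounds on each ε j
  have hbnd : ∀ j < K, 0 ≤ ε j ∧ ε j ≤ c * ((x0 j) ^ p * Δt) := by
    intro j hj
    obtain ⟨hS, hI_le, hle_I⟩ := riemann_tail_bounds hp hΔt (hx0pos j hj)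
    rw [hε j hj]
    constructor
    · exact mul_nonneg hc.le (by linarith)
    · exact mul_le_mul_of_nonneg_left (by linarith) hc.le
  -- summability of zeta series
  have hsummz : Summable (fun n : ℕ => ((n : ℝ) + 1) ^ p) := by
    have h1 : Summable (fun n : ℕ => (n : ℝ) ^ p) := Real.summable_nat_rpow.2 hp
    have h2 := (summable_nat_add_iff 1).2 h1
    refine h2.congr fun n => ?_
    push_cast
    ring_nf
  have hznn : 0 ≤ realZeta (3/2 - H) :=
    tsum_nonneg fun n => Real.rpow_nonneg (by positivity) _
  -- the finite sum of (K-j)^p bounded by zeta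
  have hzeta : (∑ j ∈ Finset.range K, ((K - j : ℕ) : ℝ) ^ p) ≤ realZeta (3/2 - H) := by
    have hre : (∑ j ∈ Finset.range K, ((K - j : ℕ) : ℝ) ^ p)
        = ∑ i ∈ Finset.range K, (((i + 1 : ℕ)) : ℝ) ^ p := by
      rw [← Finset.sum_range_reflect (fun i => (((i + 1 : ℕ)) : ℝ) ^ p) K]
      refine Finset.sum_congr rfl fun j hj => ?_
      have hjK : j < K := Finset.mem_range.1 hj
      have : K - 1 - j + 1 = K - j := by omega
      rw [this]
    rw [hre]
    have : realZeta (3/2 - H) = ∑' n : ℕ, ((n : ℝ) + 1) ^ p := by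
      unfold realZeta
      exact tsum_congr fun n => by rw [hp_def]; norm_num
    rw [this]
    have := Summable.sum_le_tsum (Finset.range K)
      (fun i _ => Real.rpow_nonneg (by positivity : (0:ℝ) ≤ (i:ℝ)+1) p) hsummz
    refine le_trans (le_of_eq ?_) this
    exact Finset.sum_congr rfl fun i _ => by push_cast; ring_nf
  have hΔpow : Δt ^ p * Δt = Δt ^ (H - 1/2) := by
    rw [← Real.rpow_add_one hΔt.ne' p]
    congr 1
    rw [hp_def]; ring
  -- part 1
  have part1 : (∑ j ∈ Finset.range K, ε j) ≤ c * realZeta (3/2 - H) * Δt ^ (H - 1/2) := by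
    calc (∑ j ∈ Finset.range K, ε j)
        ≤ ∑ j ∈ Finset.range K, c * ((x0 j) ^ p * Δt) :=
          Finset.sum_le_sum fun j hj => (hbnd j (Finset.mem_range.1 hj)).2
      _ = (c * (Δt ^ p * Δt)) * ∑ j ∈ Finset.range K, ((K - j : ℕ) : ℝ) ^ p := by
          rw [Finset.mul_sum]
          refine Finset.sum_congr rfl fun j hj => ?_
          rw [hx0_def]
          rw [Real.mul_rpow (Nat.cast_nonneg _) hΔt.le]
          ring
      _ ≤ (c * (Δt ^ p * Δt)) * realZeta (3/2 - H) := by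
          refine mul_le_mul_of_nonneg_left hzeta ?_
          have : (0:ℝ) ≤ Δt ^ p * Δt := by positivity
          positivity
      _ = c * realZeta (3/2 - H) * Δt ^ (H - 1/2) := by rw [hΔpow]; ring
  refine ⟨part1, ?_⟩
  intro b hb
  have hsqrt : Real.sqrt Δt = Δt ^ ((1:ℝ)/2) := Real.sqrt_eq_rpow Δt
  calc |∑ j ∈ Finset.range K, ε j * b j|
      ≤ ∑ j ∈ Finset.range K, |ε j * b j| := Finset.abs_sum_le_sum_abs _ _
    _ ≤ ∑ j ∈ Finset.range K, ε j * Real.sqrt Δt := by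
        refine Finset.sum_le_sum fun j hj => ?_
        have hjK := Finset.mem_range.1 hj
        rw [abs_mul, abs_of_nonneg (hbnd j hjK).1]
        exact mul_le_mul_of_nonneg_left (hb j hjK) (hbnd j hjK).1
    _ = (∑ j ∈ Finset.range K, ε j) * Real.sqrt Δt := (Finset.sum_mul _ _ _).symm
    _ ≤ (c * realZeta (3/2 - H) * Δt ^ (H - 1/2)) * Real.sqrt Δt :=
        mul_le_mul_of_nonneg_right part1 (Real.sqrt_nonneg _)
    _ = c * realZeta (3/2 - H) * Δt ^ H := by
        rw [hsqrt, mul_assoc, ← Real.rpow_add hΔt]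
        norm_num
end

section
/- (Lemma 2, δ̃-part) Let 0 < H < 1/2, let N be a positive integer with Δt = 1/N, and let t = KΔt with integer K ≥ 1. Then the series ∑_{k=1}^∞ δ̃_N(−kΔt, t) converges with sum at most −(H−1/2)·ζ(3/2−H)·Δt^(H−1/2). Consequently, for any real numbers (b_k)_{k≥1} with |b_k| ≤ √Δt for all k, the series ∑_{k=1}^∞ δ̃_N(−kΔt, t)·b_k converges absolutely and | ∑_{k=1}^∞ δ̃_N(−kΔt, t)·b_k | ≤ −(H−1/2)·ζ(3/2−H)·Δt^H. -/
open MeasureTheory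

set_option maxHeartbeats 1000000 in

lemma key_delta (H : ℝ) (hH : H < 1/2) (Δt : ℝ) (hΔt : 0 < Δt)
    (a : ℝ) (ha : 0 < a) (K : ℕ) :
    0 ≤ (∑ i ∈ Finset.range K, -(H - 1/2) * ((i : ℝ) * Δt + a) ^ (H - 3/2) * Δt)
        - ∫ s in (0 : ℝ)..((K : ℝ) * Δt), -(H - 1/2) * (s + a) ^ (H - 3/2) ∧
    (∑ i ∈ Finset.range K, -(H - 1/2) * ((i : ℝ) * Δt + a) ^ (H - 3/2) * Δt)
        - (∫ s in (0 : ℝ)..((K : ℝ) * Δt), -(H - 1/2) * (s + a) ^ (H - 3/2))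
      ≤ -(H - 1/2) * a ^ (H - 3/2) * Δt := by
  set p : ℝ := H - 3/2 with hp
  have hpneg : p ≤ 0 := by rw [hp]; linarith
  set c : ℝ := -(H - 1/2) with hc
  have hcpos : 0 < c := by rw [hc]; linarith
  set f : ℝ → ℝ := fun s => c * (s + a) ^ p with hf
  -- continuity / integrability
  have hcont : ContinuousOn f (Set.Ici (0 : ℝ)) := by
    apply continuousOn_const.mul
    apply ContinuousOn.rpow_const (continuousOn_id.add continuousOn_const)
    intro s hs
    exact Or.inl (by simp only [Set.mem_Ici] at hs; show s + a ≠ 0; positivity)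
  have hinteg : ∀ x y : ℝ, 0 ≤ x → 0 ≤ y → IntervalIntegrable f volume x y := by
    intro x y hx hy
    apply (hcont.mono _).intervalIntegrable
    intro s hs
    rcases le_total x y with h | h
    · rw [Set.uIcc_of_le h] at hs; exact le_trans hx hs.1
    · rw [Set.uIcc_of_ge h] at hs; exact le_trans hy hs.1
  -- split the integral
  have hsplit : (∫ s in (0 : ℝ)..((K : ℝ) * Δt), f s)
      = ∑ i ∈ Finset.range K, ∫ s in ((i : ℝ) * Δt)..(((i : ℝ) + 1) * Δt), f s := by
    have := intervalIntegral.sum_integral_adjacent_intervals (a := fun i : ℕ => (i : ℝ) * Δt)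
      (f := f) (μ := volume) (n := K) ?_
    · simp only [Nat.cast_zero, zero_mul] at this
      rw [← this]
      norm_num
    · intro i _
      have : ((i : ℝ) + 1) = ((i + 1 : ℕ) : ℝ) := by push_cast; ring
      apply hinteg <;> positivity
  -- pointwise monotonicity of f
  have hmono : ∀ x y : ℝ, 0 ≤ x → x ≤ y → f y ≤ f x := by
    intro x y hx hxy
    apply mul_le_mul_of_nonneg_left _ hcpos.le
    exact Real.rpow_le_rpow_of_nonpos (by positivity) (by linarith) hpneg
  -- per-interval bounds
  have hlow : ∀ i : ℕ, f (((i : ℝ) + 1) * Δt) * Δt ≤ ∫ s in ((i : ℝ) * Δt)..(((i : ℝ) + 1) * Δt), f s := by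
    intro i
    have h1 : (i : ℝ) * Δt ≤ ((i : ℝ) + 1) * Δt := by nlinarith [hΔt.le]
    have := intervalIntegral.integral_mono_on h1
      (intervalIntegrable_const (c := f (((i : ℝ) + 1) * Δt)))
      (hinteg _ _ (by positivity) (by positivity))
      (fun s hs => hmono s _ (le_trans (by positivity) hs.1) hs.2)
    rw [intervalIntegral.integral_const, smul_eq_mul, show ((i : ℝ) + 1) * Δt - (i : ℝ) * Δt = Δt by ring] at this
    rw [mul_comm]; exact this
  have hupp : ∀ i : ℕ, (∫ s in ((i : ℝ) * Δt)..(((i : ℝ) + 1) * Δt), f s) ≤ f ((i : ℝ) * Δt) * Δt := by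
    intro i
    have h1 : (i : ℝ) * Δt ≤ ((i : ℝ) + 1) * Δt := by nlinarith [hΔt.le]
    have := intervalIntegral.integral_mono_on h1
      (hinteg _ _ (by positivity) (by positivity))
      (intervalIntegrable_const (c := f ((i : ℝ) * Δt)))
      (fun s hs => hmono _ s (by positivity) hs.1)
    rw [intervalIntegral.integral_const, smul_eq_mul, show ((i : ℝ) + 1) * Δt - (i : ℝ) * Δt = Δt by ring] at this
    rw [mul_comm (f ((i : ℝ) * Δt))]; exact this
  have hsum_eq : (∑ i ∈ Finset.range K, c * ((i : ℝ) * Δt + a) ^ p * Δt)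
        - ∫ s in (0 : ℝ)..((K : ℝ) * Δt), f s
      = ∑ i ∈ Finset.range K, (f ((i : ℝ) * Δt) * Δt - ∫ s in ((i : ℝ) * Δt)..(((i : ℝ) + 1) * Δt), f s) := by
    rw [hsplit, ← Finset.sum_sub_distrib]
  constructor
  · rw [show (∫ s in (0 : ℝ)..((K : ℝ) * Δt), -(H - 1/2) * (s + a) ^ (H - 3/2)) = ∫ s in (0 : ℝ)..((K : ℝ) * Δt), f s from rfl, hsum_eq]
    apply Finset.sum_nonneg
    intro i _
    linarith [hupp i]
  · rw [show (∫ s in (0 : ℝ)..((K : ℝ) * Δt), -(H - 1/2) * (s + a) ^ (H - 3/2)) = ∫ s in (0 : ℝ)..((K : ℝ) * Δt), f s from rfl, hsum_eq]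
    calc ∑ i ∈ Finset.range K, (f ((i : ℝ) * Δt) * Δt - ∫ s in ((i : ℝ) * Δt)..(((i : ℝ) + 1) * Δt), f s)
        ≤ ∑ i ∈ Finset.range K, (f ((i : ℝ) * Δt) * Δt - f (((i : ℝ) + 1) * Δt) * Δt) := by
          apply Finset.sum_le_sum; intro i _; linarith [hlow i]
      _ = (f 0 - f ((K : ℝ) * Δt)) * Δt := by
          have : ∀ i : ℕ, f ((i : ℝ) * Δt) * Δt - f (((i : ℝ) + 1) * Δt) * Δt
              = (fun j : ℕ => f ((j : ℝ) * Δt) * Δt) i - (fun j : ℕ => f ((j : ℝ) * Δt) * Δt) (i + 1) := by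
            intro i; push_cast; ring_nf
          rw [Finset.sum_congr rfl (fun i _ => this i), Finset.sum_range_sub']
          push_cast; ring
      _ ≤ f 0 * Δt := by
          have : 0 ≤ f ((K : ℝ) * Δt) := by
            apply mul_nonneg hcpos.le (Real.rpow_nonneg (by positivity) _)
          nlinarith
      _ = c * a ^ p * Δt := by simp [hf]

/-- Lemma 2, δ̃-part: for `0 < H < 1/2`, `Δt = 1/N`, `t = KΔt` with `K ≥ 1`, the series
`∑_{k=1}^∞ δ̃_N(-kΔt, t)` converges with sum at most `-(H-1/2)·ζ(3/2-H)·Δt^(H-1/2)`, and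
for any reals `(b_k)_{k≥1}` with `|b_k| ≤ √Δt`, the series `∑_{k=1}^∞ δ̃_N(-kΔt, t)·b_k`
converges absolutely with `|∑_{k=1}^∞ δ̃_N(-kΔt, t)·b_k| ≤ -(H-1/2)·ζ(3/2-H)·Δt^H`. Here
`δ̃_N(r,t) = ∑_{s=0}^{t} -(H-1/2)(s-r)^(H-3/2) Δt - ∫_0^t -(H-1/2)(s-r)^(H-3/2) ds`. -/
theorem tilde_delta_sum_bound (H : ℝ) (hH0 : 0 < H) (hH : H < 1/2)
    (N : ℕ) (hN : 0 < N) (K : ℕ) (hK : 1 ≤ K) :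
    let Δt : ℝ := 1 / N
    let t : ℝ := K * Δt
    let δ : ℕ → ℝ := fun k =>
      (∑ i ∈ Finset.range K, -(H - 1/2) * ((i : ℝ) * Δt - (-(k * Δt))) ^ (H - 3/2) * Δt)
        - ∫ s in (0 : ℝ)..t, -(H - 1/2) * (s - (-(k * Δt))) ^ (H - 3/2)
    (Summable (fun k : ℕ => δ (k + 1)) ∧
      (∑' k : ℕ, δ (k + 1)) ≤ -(H - 1/2) * realZeta (3/2 - H) * Δt ^ (H - 1/2)) ∧
    ∀ b : ℕ → ℝ, (∀ k, 1 ≤ k → |b k| ≤ Real.sqrt Δt) →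
      Summable (fun k : ℕ => |δ (k + 1) * b (k + 1)|) ∧
      |∑' k : ℕ, δ (k + 1) * b (k + 1)| ≤ -(H - 1/2) * realZeta (3/2 - H) * Δt ^ H := by
  intro Δt t δ
  have hΔt : 0 < Δt := by simp only [Δt]; positivity
  have hc : 0 < -(H - 1/2) := by linarith
  -- rewrite δ k via key_delta with a = k*Δt
  have hkey : ∀ k : ℕ, 1 ≤ k →
      0 ≤ δ k ∧ δ k ≤ -(H - 1/2) * ((k : ℝ) * Δt) ^ (H - 3/2) * Δt := by
    intro k hk
    have ha : 0 < (k : ℝ) * Δt := by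
      have : (0 : ℝ) < (k : ℝ) := by exact_mod_cast hk
      positivity
    have h := key_delta H hH Δt hΔt ((k : ℝ) * Δt) ha K
    have heq : δ k = (∑ i ∈ Finset.range K, -(H - 1/2) * ((i : ℝ) * Δt + (k : ℝ) * Δt) ^ (H - 3/2) * Δt)
        - ∫ s in (0 : ℝ)..((K : ℝ) * Δt), -(H - 1/2) * (s + (k : ℝ) * Δt) ^ (H - 3/2) := by
      simp only [δ, t, sub_neg_eq_add]
    rw [heq]
    exact h
  -- the dominating series
  set g : ℕ → ℝ := fun k => -(H - 1/2) * Δt ^ (H - 1/2) * ((k : ℝ) + 1) ^ (H - 3/2) with hg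
  have hbound : ∀ k : ℕ, δ (k + 1) ≤ g k := by
    intro k
    have h := (hkey (k + 1) (Nat.le_add_left 1 k)).2
    have : ((k + 1 : ℕ) : ℝ) * Δt = Δt * ((k : ℝ) + 1) := by push_cast; ring
    rw [this, Real.mul_rpow hΔt.le (by positivity)] at h
    calc δ (k + 1) ≤ -(H - 1/2) * (Δt ^ (H - 3/2) * ((k : ℝ) + 1) ^ (H - 3/2)) * Δt := h
      _ = g k := by
        have h2 : Δt ^ (H - 3/2) * Δt = Δt ^ (H - 1/2) := by
          rw [show (H - 1/2) = (H - 3/2) + 1 by ring, Real.rpow_add hΔt, Real.rpow_one]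
        calc -(H - 1/2) * (Δt ^ (H - 3/2) * ((k : ℝ) + 1) ^ (H - 3/2)) * Δt
            = -(H - 1/2) * (Δt ^ (H - 3/2) * Δt) * ((k : ℝ) + 1) ^ (H - 3/2) := by ring
          _ = g k := by rw [h2, hg]
  have hgsum : Summable g := by
    apply Summable.mul_left
    have : Summable (fun n : ℕ => ((n : ℝ)) ^ (H - 3/2)) := by
      rw [Real.summable_nat_rpow]
      linarith
    have h2 := (summable_nat_add_iff 1).2 this
    apply h2.congr
    intro n; push_cast; ring_nf
  have hδnn : ∀ k : ℕ, 0 ≤ δ (k + 1) := fun k => (hkey (k + 1) (Nat.le_add_left 1 k)).1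
  have hδsum : Summable (fun k : ℕ => δ (k + 1)) :=
    Summable.of_nonneg_of_le hδnn hbound hgsum
  have hgts : ∑' k : ℕ, g k = -(H - 1/2) * realZeta (3/2 - H) * Δt ^ (H - 1/2) := by
    rw [hg, tsum_mul_left, realZeta]
    have : ∀ n : ℕ, ((n : ℝ) + 1) ^ (-(3/2 - H)) = ((n : ℝ) + 1) ^ (H - 3/2) := by
      intro n; norm_num
    rw [tsum_congr this]
    ring
  have htsum_le : (∑' k : ℕ, δ (k + 1)) ≤ -(H - 1/2) * realZeta (3/2 - H) * Δt ^ (H - 1/2) := by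
    rw [← hgts]
    exact Summable.tsum_le_tsum hbound hδsum hgsum
  refine ⟨⟨hδsum, htsum_le⟩, ?_⟩
  intro b hb
  have habs : ∀ k : ℕ, |δ (k + 1) * b (k + 1)| ≤ δ (k + 1) * Real.sqrt Δt := by
    intro k
    rw [abs_mul, abs_of_nonneg (hδnn k)]
    exact mul_le_mul_of_nonneg_left (hb (k + 1) (Nat.le_add_left 1 k)) (hδnn k)
  have hsumabs : Summable (fun k : ℕ => |δ (k + 1) * b (k + 1)|) :=
    Summable.of_nonneg_of_le (fun k => abs_nonneg _) habs (hδsum.mul_right _)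
  refine ⟨hsumabs, ?_⟩
  have hsummable : Summable (fun k : ℕ => δ (k + 1) * b (k + 1)) :=
    summable_abs_iff.1 hsumabs
  calc |∑' k : ℕ, δ (k + 1) * b (k + 1)| ≤ ∑' k : ℕ, |δ (k + 1) * b (k + 1)| := by
        have h3 := norm_tsum_le_tsum_norm (f := fun k : ℕ => δ (k + 1) * b (k + 1))
          (by simp only [Real.norm_eq_abs]; exact hsumabs)
        simp only [Real.norm_eq_abs] at h3
        exact h3
    _ ≤ ∑' k : ℕ, δ (k + 1) * Real.sqrt Δt :=
        Summable.tsum_le_tsum habs hsumabs (hδsum.mul_right _)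
    _ = (∑' k : ℕ, δ (k + 1)) * Real.sqrt Δt := tsum_mul_right
    _ ≤ (-(H - 1/2) * realZeta (3/2 - H) * Δt ^ (H - 1/2)) * Real.sqrt Δt := by
        exact mul_le_mul_of_nonneg_right htsum_le (Real.sqrt_nonneg _)
    _ = -(H - 1/2) * realZeta (3/2 - H) * Δt ^ H := by
        rw [Real.sqrt_eq_rpow, mul_assoc, mul_assoc, ← Real.rpow_add hΔt]
        norm_num
        ring
end

section
/- Let 0 < H < 1/2, let N be a positive integer with Δt = 1/N, and let r = jΔt and t = KΔt be grid points with integers 0 ≤ j < K. Set K_H = −(H−1/2)·ζ(3/2−H). Then K_H·Δt^(H−1/2) + ∑_{s=r+Δt}^{t} (H−1/2)(s−r)^(H−3/2) Δt = (t−r)^(H−1/2) + ε̃_N(r,t). In particular, ∑_{s=r+Δt}^{∞} (H−1/2)(s−r)^(H−3/2) Δt (over grid points s = r+Δt, r+2Δt, …) converges to −K_H·Δt^(H−1/2). -/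
open MeasureTheory

/-- For `0 < H < 1/2`, `Δt = 1/N`, grid points `r = jΔt`, `t = KΔt` with `0 ≤ j < K`, and
`K_H = -(H-1/2)·ζ(3/2-H)`:
`K_H·Δt^(H-1/2) + ∑_{s=r+Δt}^{t} (H-1/2)(s-r)^(H-3/2) Δt = (t-r)^(H-1/2) + ε̃_N(r,t)`,
and the series `∑_{s=r+Δt}^{∞} (H-1/2)(s-r)^(H-3/2) Δt` over grid points sums to
`-K_H·Δt^(H-1/2)`. Here
`ε̃_N(r,t) = ∑_{s=t}^{∞} -(H-1/2)(s-r)^(H-3/2) Δt - ∫_t^∞ -(H-1/2)(s-r)^(H-3/2) ds`. -/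
theorem increment_coefficient_identity (H : ℝ) (hH0 : 0 < H) (hH : H < 1/2)
    (N : ℕ) (hN : 0 < N) (j K : ℕ) (hjK : j < K) :
    let Δt : ℝ := 1 / N
    let r : ℝ := j * Δt
    let t : ℝ := K * Δt
    let KH : ℝ := -(H - 1/2) * realZeta (3/2 - H)
    let ε : ℝ :=
      (∑' m : ℕ, -(H - 1/2) * (((K + m : ℕ) : ℝ) * Δt - r) ^ (H - 3/2) * Δt)
        - ∫ s in Set.Ioi t, -(H - 1/2) * (s - r) ^ (H - 3/2)
    (KH * Δt ^ (H - 1/2)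
        + ∑ i ∈ Finset.Ico (j + 1) K, (H - 1/2) * ((i : ℝ) * Δt - r) ^ (H - 3/2) * Δt
      = (t - r) ^ (H - 1/2) + ε) ∧
    HasSum (fun m : ℕ => (H - 1/2) * (((j + 1 + m : ℕ) : ℝ) * Δt - r) ^ (H - 3/2) * Δt)
      (-(KH * Δt ^ (H - 1/2))) := by
  intro Δt r t KH ε
  have hΔt : (0:ℝ) < Δt := by
    simp only [Δt]; positivity
  have hp : H - 3/2 < -1 := by linarith
  -- base hasSum for the zeta-type series
  have hzsum : HasSum (fun n : ℕ => ((n : ℝ) + 1) ^ (H - 3/2)) (realZeta (3/2 - H)) := by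
    have hsum : Summable (fun n : ℕ => ((n : ℝ) + 1) ^ (H - 3/2)) := by
      have h1 : Summable (fun n : ℕ => ((n : ℝ)) ^ (H - 3/2)) :=
        Real.summable_nat_rpow.mpr hp
      have h2 := h1.comp_injective (add_left_injective 1)
      refine h2.congr fun n => ?_
      simp only [Function.comp]
      push_cast
      ring_nf
    have hz : realZeta (3/2 - H) = ∑' n : ℕ, ((n : ℝ) + 1) ^ (H - 3/2) := by
      unfold realZeta
      congr 1; funext n; ring_nf
    rw [hz]
    exact hsum.hasSum
  set g : ℕ → ℝ := fun m => (H - 1/2) * (((j + 1 + m : ℕ) : ℝ) * Δt - r) ^ (H - 3/2) * Δt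
    with hg_def
  have h3 : Δt ^ (H - 3/2) * Δt = Δt ^ (H - 1/2) := by
    nth_rewrite 2 [← Real.rpow_one Δt]
    rw [← Real.rpow_add hΔt]; congr 1; ring
  have hgeq : ∀ m : ℕ, g m = ((m : ℝ) + 1) ^ (H - 3/2) * ((H - 1/2) * Δt ^ (H - 1/2)) := by
    intro m
    have h1 : (((j + 1 + m : ℕ) : ℝ) * Δt - r) = ((m : ℝ) + 1) * Δt := by
      simp only [r]; push_cast; ring
    have h2 : (((m : ℝ) + 1) * Δt) ^ (H - 3/2)
        = ((m : ℝ) + 1) ^ (H - 3/2) * Δt ^ (H - 3/2) :=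
      Real.mul_rpow (by positivity) hΔt.le
    calc g m = (H - 1/2) * (((m : ℝ) + 1) ^ (H - 3/2) * Δt ^ (H - 3/2)) * Δt := by
          rw [hg_def]; simp only [h1, h2]
      _ = ((m : ℝ) + 1) ^ (H - 3/2) * ((H - 1/2) * (Δt ^ (H - 3/2) * Δt)) := by ring
      _ = ((m : ℝ) + 1) ^ (H - 3/2) * ((H - 1/2) * Δt ^ (H - 1/2)) := by rw [h3]
  have hgsum : HasSum g (-(KH * Δt ^ (H - 1/2))) := by
    have := hzsum.mul_right ((H - 1/2) * Δt ^ (H - 1/2))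
    have heq : realZeta (3/2 - H) * ((H - 1/2) * Δt ^ (H - 1/2))
        = -(KH * Δt ^ (H - 1/2)) := by simp only [KH]; ring
    rw [heq] at this
    refine HasSum.congr_fun this fun m => hgeq m
  refine ⟨?_, hgsum⟩
  -- split the series at K
  set d : ℕ := K - (j + 1) with hd_def
  have hK : K = j + 1 + d := by omega
  have hsplit := Summable.sum_add_tsum_nat_add d hgsum.summable
  rw [hgsum.tsum_eq] at hsplit
  have hS : ∑ i ∈ Finset.Ico (j + 1) K, (H - 1/2) * ((i : ℝ) * Δt - r) ^ (H - 3/2) * Δt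
      = ∑ i ∈ Finset.range d, g i := by
    rw [Finset.sum_Ico_eq_sum_range]
  have hT : (∑' m : ℕ, -(H - 1/2) * (((K + m : ℕ) : ℝ) * Δt - r) ^ (H - 3/2) * Δt)
      = -∑' i : ℕ, g (i + d) := by
    rw [← tsum_neg]
    congr 1; funext m
    simp only [hg_def]
    rw [show j + 1 + (m + d) = K + m from by omega]
    ring
  -- the improper integral
  have htr : 0 < t - r := by
    have : (j : ℝ) < K := by exact_mod_cast hjK
    simp only [t, r]
    nlinarith
  have hI : (∫ s in Set.Ioi t, -(H - 1/2) * (s - r) ^ (H - 3/2)) = (t - r) ^ (H - 1/2) := by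
    have hderiv : ∀ x ∈ Set.Ici t,
        HasDerivAt (fun x => -(x - r) ^ (H - 1/2)) (-(H - 1/2) * (x - r) ^ (H - 3/2)) x := by
      intro x hx
      have hxr : 0 < x - r := lt_of_lt_of_le htr (by simpa using sub_le_sub_right hx.out r)
      have h := ((hasDerivAt_id' (x := x)).sub_const r).rpow_const
        (p := H - 1/2) (Or.inl hxr.ne')
      have hexp : H - 1/2 - 1 = H - 3/2 := by ring
      rw [hexp] at h
      have h2 : HasDerivAt (fun y => -(y - r) ^ (H - 1/2)) (-(1 * (H - 1/2) * (x - r) ^ (H - 3/2))) x := h.neg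
      convert h2 using 1
      ring
    have hpos : ∀ x ∈ Set.Ioi t, 0 ≤ -(H - 1/2) * (x - r) ^ (H - 3/2) := by
      intro x hx
      have hxr : 0 < x - r := lt_trans htr (by simpa using sub_lt_sub_right hx.out r)
      exact mul_nonneg (by linarith) (Real.rpow_nonneg hxr.le _)
    have htend : Filter.Tendsto (fun x => -(x - r) ^ (H - 1/2)) Filter.atTop (nhds 0) := by
      have h0 : Filter.Tendsto (fun y : ℝ => y ^ (H - 1/2)) Filter.atTop (nhds 0) := by
        simpa using tendsto_rpow_neg_atTop (by linarith : (0:ℝ) < -(H - 1/2))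
      have h1 : Filter.Tendsto (fun x : ℝ => x - r) Filter.atTop Filter.atTop :=
        Filter.tendsto_atTop_add_const_right _ (-r) Filter.tendsto_id
      have := (h0.comp h1).neg
      simpa [Function.comp] using this
    have := integral_Ioi_of_hasDerivAt_of_nonneg' hderiv hpos htend
    rw [this]
    simp
  rw [hS]
  simp only [ε]
  rw [hT, hI]
  linarith [hsplit]
end

section
/- Let 0 < H < 1 and t > 0 be real. For each positive integer N set Δt = 1/N and t_N = ⌊Nt⌋·Δt. Then the Riemann sums of the squared Mandelbrot–Van Ness kernel over the grid converge to the corresponding integral: lim_{N→∞} ∑_{k ∈ ℤ, kΔt < t_N} ((t_N − kΔt)^(H−1/2) − ((−kΔt)₊)^(H−1/2))² · Δt = ∫_{−∞}^{t} ((t−r)^(H−1/2) − ((−r)₊)^(H−1/2))² dr, where for each N the sum over k converges absolutely. -/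
open MeasureTheory Filter Set Real

section MvnAux





lemma abs_rpow_sub_rpow_le {a : ℝ} (ha : a ≤ 1) {y d : ℝ} (hy : 0 < y) (hd : 0 ≤ d) :
    |(y + d) ^ a - y ^ a| ≤ |a| * y ^ (a - 1) * d := by
  have h := Convex.norm_image_sub_le_of_norm_hasDerivWithin_le
    (f := fun x : ℝ => x ^ a) (f' := fun x : ℝ => a * x ^ (a - 1)) (s := Icc y (y + d))
    (C := |a| * y ^ (a - 1)) ?_ ?_ (convex_Icc _ _)
    (left_mem_Icc.2 (by linarith)) (right_mem_Icc.2 (by linarith))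
  · simpa [Real.norm_eq_abs, abs_of_nonneg hd] using h
  · intro x hx
    exact (Real.hasDerivAt_rpow_const (Or.inl (by nlinarith [hx.1] : x ≠ 0))).hasDerivWithinAt
  · intro x hx
    rw [Real.norm_eq_abs, abs_mul, abs_of_nonneg (Real.rpow_nonneg (by nlinarith [hx.1] : (0:ℝ) ≤ x) _)]
    have : x ^ (a - 1) ≤ y ^ (a - 1) :=
      Real.rpow_le_rpow_of_nonpos hy hx.1 (by linarith)
    exact mul_le_mul_of_nonneg_left this (abs_nonneg a)

lemma rpow_sq_eq {y : ℝ} (hy : 0 < y) (p : ℝ) : (y ^ p) ^ 2 = y ^ (2 * p) := by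
  rw [← Real.rpow_natCast (y ^ p) 2, ← Real.rpow_mul hy.le]
  norm_num [mul_comm]

lemma kernel_bound_neg {a s u r t : ℝ} (ha : a ≤ 1) (hs0 : 0 ≤ s) (hst : s ≤ t)
    (hur : u ≤ r) (hr : r < 0) :
    ((s - u) ^ a - (max (-u) 0) ^ a) ^ 2 ≤ a ^ 2 * t ^ 2 * (-r) ^ (2 * a - 2) := by
  have hu : u < 0 := lt_of_le_of_lt hur hr
  have hy : 0 < -u := by linarith
  have hmax : max (-u) 0 = -u := max_eq_left hy.le
  have hsu : s - u = -u + s := by ring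
  have h1 : |(-u + s) ^ a - (-u) ^ a| ≤ |a| * (-u) ^ (a - 1) * s :=
    abs_rpow_sub_rpow_le ha hy hs0
  have h2 : ((s - u) ^ a - (max (-u) 0) ^ a) ^ 2 ≤ (|a| * (-u) ^ (a - 1) * s) ^ 2 := by
    rw [hmax, hsu, ← sq_abs]
    exact pow_le_pow_left₀ (abs_nonneg _) h1 2
  refine h2.trans ?_
  have h3 : (|a| * (-u) ^ (a - 1) * s) ^ 2 = a ^ 2 * s ^ 2 * (-u) ^ (2 * a - 2) := by
    rw [mul_pow, mul_pow, sq_abs, rpow_sq_eq hy]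
    ring_nf
  rw [h3]
  have h4 : (-u) ^ (2 * a - 2) ≤ (-r) ^ (2 * a - 2) :=
    Real.rpow_le_rpow_of_nonpos (by linarith) (by linarith) (by linarith)
  have h5 : s ^ 2 ≤ t ^ 2 := by nlinarith
  exact mul_le_mul (mul_le_mul_of_nonneg_left h5 (sq_nonneg a)) h4
    (Real.rpow_nonneg (by linarith) _) (by positivity)

lemma kernel_bound_mid {a s u r t : ℝ} (ha : a ≤ 1/2) (hs0 : 0 ≤ s) (hst : s ≤ t)
    (hur : u ≤ r) (hu1 : r - 1 ≤ u) (hr : r < 0) (hr1 : -1 ≤ r) :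
    ((s - u) ^ a - (max (-u) 0) ^ a) ^ 2
      ≤ (t + 2) ^ (2 * a) + 2 + 2 * (-r) ^ (2 * a) := by
  have hu : u < 0 := lt_of_le_of_lt hur hr
  have hy : 0 < -u := by linarith
  have hmax : max (-u) 0 = -u := max_eq_left hy.le
  rw [hmax]
  set A := (s - u) ^ a with hA
  set B := (-u) ^ a with hB
  have hAn : 0 ≤ A := Real.rpow_nonneg (by linarith) _
  have hBn : 0 ≤ B := Real.rpow_nonneg (by linarith) _
  have hA2 : A ^ 2 = (s - u) ^ (2 * a) := by
    rw [hA, ← Real.rpow_natCast ((s-u)^a) 2, ← Real.rpow_mul (by linarith)]; norm_num [mul_comm]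
  have hB2 : B ^ 2 = (-u) ^ (2 * a) := by
    rw [hB, ← Real.rpow_natCast ((-u)^a) 2, ← Real.rpow_mul (by linarith)]; norm_num [mul_comm]
  have key : (A - B) ^ 2 ≤ A ^ 2 + B ^ 2 := by nlinarith [mul_nonneg hAn hBn]
  have hAbound : A ^ 2 ≤ (t + 2) ^ (2 * a) + (-r) ^ (2 * a) := by
    rw [hA2]
    rcases le_or_gt 0 (2 * a) with h2a | h2a
    · have : (s - u) ^ (2*a) ≤ (t+2) ^ (2*a) :=
        Real.rpow_le_rpow (by linarith) (by linarith) h2a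
      have := Real.rpow_nonneg (by linarith : (0:ℝ) ≤ -r) (2*a)
      linarith
    · have : (s - u) ^ (2*a) ≤ (-r) ^ (2*a) :=
        Real.rpow_le_rpow_of_nonpos (by linarith) (by linarith) h2a.le
      have := Real.rpow_nonneg (by linarith : (0:ℝ) ≤ t + 2) (2*a)
      linarith
  have hBbound : B ^ 2 ≤ 2 + (-r) ^ (2 * a) := by
    rw [hB2]
    rcases le_or_gt 0 (2 * a) with h2a | h2a
    · have h1 : (-u) ^ (2*a) ≤ (2:ℝ) ^ (2*a) :=
        Real.rpow_le_rpow (by linarith) (by linarith) h2a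
      have h2 : (2:ℝ) ^ (2*a) ≤ (2:ℝ) ^ (1:ℝ) :=
        Real.rpow_le_rpow_of_exponent_le (by norm_num) (by linarith)
      have := Real.rpow_nonneg (by linarith : (0:ℝ) ≤ -r) (2*a)
      rw [Real.rpow_one] at h2
      linarith
    · have : (-u) ^ (2*a) ≤ (-r) ^ (2*a) :=
        Real.rpow_le_rpow_of_nonpos (by linarith) (by linarith) h2a.le
      linarith
  linarith

lemma kernel_bound_pos {a s u r t : ℝ} (ha0 : a ≠ 0) (hu0 : 0 ≤ u) (hus : u < s)
    (hst : s ≤ t) (hrt : r < t) (h3 : (t - r)/3 ≤ s - u) :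
    ((s - u) ^ a - (max (-u) 0) ^ a) ^ 2
      ≤ t ^ (2 * a) + 3 ^ (-(2 * a)) * (t - r) ^ (2 * a) := by
  have hmax : max (-u) 0 = 0 := max_eq_right (by linarith)
  rw [hmax, Real.zero_rpow ha0, sub_zero]
  have hsu : 0 < s - u := by linarith
  have hA2 : ((s - u) ^ a) ^ 2 = (s - u) ^ (2 * a) := by
    rw [← Real.rpow_natCast ((s-u)^a) 2, ← Real.rpow_mul hsu.le]; norm_num [mul_comm]
  rw [hA2]
  rcases le_or_gt 0 (2 * a) with h2a | h2a
  · have h1 : (s - u) ^ (2*a) ≤ t ^ (2*a) :=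
      Real.rpow_le_rpow hsu.le (by linarith) h2a
    have h2 : 0 ≤ 3 ^ (-(2*a)) * (t - r) ^ (2*a) :=
      mul_nonneg (Real.rpow_nonneg (by norm_num) _) (Real.rpow_nonneg (by linarith) _)
    linarith
  · have htr : 0 < t - r := by linarith
    have h1 : (s - u) ^ (2*a) ≤ ((t - r)/3) ^ (2*a) :=
      Real.rpow_le_rpow_of_nonpos (by positivity) h3 h2a.le
    have h2 : ((t - r)/3) ^ (2*a) = 3 ^ (-(2*a)) * (t - r) ^ (2*a) := by
      rw [Real.div_rpow htr.le (by norm_num), Real.rpow_neg (by norm_num)]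
      ring
    have := Real.rpow_nonneg (by linarith : (0:ℝ) ≤ t) (2*a)
    rw [h2] at h1
    linarith


noncomputable def mvnBound (a t : ℝ) (r : ℝ) : ℝ :=
  (Ici (1:ℝ)).indicator (fun x => a^2*t^2 * x ^ (2*a-2)) (-r)
  + (Ioc (0:ℝ) 1).indicator (fun x => (t+2)^(2*a) + 2 + 2 * x^(2*a)) (-r)
  + (Ioc (0:ℝ) t).indicator (fun x => t^(2*a) + 3^(-(2*a)) * x^(2*a)) (t - r)

lemma mvn_nonneg1 {a t : ℝ} : ∀ x ∈ Ici (1:ℝ), (0:ℝ) ≤ a^2*t^2 * x ^ (2*a-2) :=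
  fun x hx => mul_nonneg (by positivity) (Real.rpow_nonneg (by linarith [mem_Ici.1 hx]) _)

lemma mvn_nonneg2 {a t : ℝ} (ht : 0 < t) :
    ∀ x ∈ Ioc (0:ℝ) 1, (0:ℝ) ≤ (t+2)^(2*a) + 2 + 2 * x^(2*a) := fun x hx => by
  have h1 := Real.rpow_nonneg (show (0:ℝ) ≤ t+2 by linarith) (2*a)
  have h2 := Real.rpow_nonneg hx.1.le (2*a)
  linarith

lemma mvn_nonneg3 {a t : ℝ} (ht : 0 < t) :
    ∀ x ∈ Ioc (0:ℝ) t, (0:ℝ) ≤ t^(2*a) + 3^(-(2*a)) * x^(2*a) := fun x hx => by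
  have h1 := Real.rpow_nonneg ht.le (2*a)
  have h2 := Real.rpow_nonneg hx.1.le (2*a)
  have h3 := Real.rpow_nonneg (show (0:ℝ) ≤ 3 by norm_num) (-(2*a))
  nlinarith

lemma mvnBound_nonneg {a t : ℝ} (ht : 0 < t) (r : ℝ) : 0 ≤ mvnBound a t r := by
  unfold mvnBound
  have h1 := Set.indicator_nonneg (mvn_nonneg1 (a := a) (t := t)) (-r)
  have h2 := Set.indicator_nonneg (mvn_nonneg2 (a := a) ht) (-r)
  have h3 := Set.indicator_nonneg (mvn_nonneg3 (a := a) ht) (t - r)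
  linarith

lemma mvnBound_integrable {a t : ℝ} (ha1 : -1 < 2*a) (ha2 : 2*a - 2 < -1) (ht : 0 < t) :
    Integrable (mvnBound a t) volume := by
  unfold mvnBound
  have h1 : Integrable ((Ici (1:ℝ)).indicator (fun x => a^2*t^2 * x ^ (2*a-2))) volume := by
    rw [integrable_indicator_iff measurableSet_Ici]
    rw [IntegrableOn, Measure.restrict_congr_set Ioi_ae_eq_Ici.symm]
    exact ((integrableOn_Ioi_rpow_of_lt ha2 one_pos).const_mul _)
  have h2 : Integrable ((Ioc (0:ℝ) 1).indicator (fun x => (t+2)^(2*a) + 2 + 2 * x^(2*a))) volume := by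
    rw [integrable_indicator_iff measurableSet_Ioc]
    have hx : IntegrableOn (fun x : ℝ => x ^ (2*a)) (Ioc (0:ℝ) 1) volume :=
      (intervalIntegral.intervalIntegrable_rpow' ha1 (a := 0) (b := 1)).1
    exact (integrableOn_const measure_Ioc_lt_top.ne).add (hx.const_mul 2)
  have h3 : Integrable ((Ioc (0:ℝ) t).indicator (fun x => t^(2*a) + 3^(-(2*a)) * x^(2*a))) volume := by
    rw [integrable_indicator_iff measurableSet_Ioc]
    have hx : IntegrableOn (fun x : ℝ => x ^ (2*a)) (Ioc (0:ℝ) t) volume :=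
      (intervalIntegral.intervalIntegrable_rpow' ha1 (a := 0) (b := t)).1
    exact (integrableOn_const measure_Ioc_lt_top.ne).add (hx.const_mul _)
  have h3' : Integrable (fun r : ℝ =>
      (Ioc (0:ℝ) t).indicator (fun x => t^(2*a) + 3^(-(2*a)) * x^(2*a)) (t - r)) volume := by
    have := (h3.comp_neg).comp_sub_right t
    simpa [sub_eq_add_neg, neg_sub, neg_add_eq_sub] using this
  exact (h1.comp_neg.add h2.comp_neg).add h3'

/-- The main domination estimate. -/
lemma mvnG_le_bound {H t : ℝ} (hH0 : 0 < H) (hH1 : H < 1) (hH : H ≠ 1/2) (ht : 0 < t)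
    {N : ℕ} (hN : 1 ≤ N) (r : ℝ) :
    (if ((⌊(N:ℝ)*r⌋:ℝ))/N < ((⌊(N:ℝ)*t⌋:ℝ))/N then
      (((⌊(N:ℝ)*t⌋:ℝ)/N - (⌊(N:ℝ)*r⌋:ℝ)/N) ^ (H - 1/2)
        - (max (-((⌊(N:ℝ)*r⌋:ℝ)/N)) 0) ^ (H - 1/2)) ^ 2
     else 0) ≤ mvnBound (H - 1/2) t r := by
  set a := H - 1/2 with ha_def
  set u := ((⌊(N:ℝ)*r⌋:ℝ))/N with hu_def
  set s := ((⌊(N:ℝ)*t⌋:ℝ))/N with hs_def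
  split_ifs with hcond
  swap
  · exact mvnBound_nonneg ht r
  have hNpos : (0:ℝ) < N := by exact_mod_cast hN
  have hN1 : (1/(N:ℝ))*N = 1 := by field_simp
  have h1N : 1/(N:ℝ) ≤ 1 := by
    rw [div_le_one hNpos]; exact_mod_cast hN
  have hu_le : u ≤ r := by
    rw [hu_def, div_le_iff₀ hNpos, mul_comm]
    exact Int.floor_le _
  have hu_gt : r - 1/N < u := by
    rw [hu_def, lt_div_iff₀ hNpos]
    have := Int.lt_floor_add_one ((N:ℝ)*r)
    nlinarith
  have hs_le : s ≤ t := by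
    rw [hs_def, div_le_iff₀ hNpos, mul_comm]
    exact Int.floor_le _
  have hs_gt : t - 1/N < s := by
    rw [hs_def, lt_div_iff₀ hNpos]
    have := Int.lt_floor_add_one ((N:ℝ)*t)
    nlinarith
  have hs0 : 0 ≤ s := by
    apply div_nonneg _ hNpos.le
    exact_mod_cast Int.floor_nonneg.2 (by positivity)
  rcases le_or_gt r (-1) with hr1 | hr1
  · have hk := kernel_bound_neg (a := a) (s := s) (u := u) (r := r) (t := t)
      (by rw [ha_def]; linarith) hs0 hs_le hu_le (by linarith)
    unfold mvnBound
    rw [Set.indicator_of_mem (show -r ∈ Ici (1:ℝ) by rw [mem_Ici]; linarith)]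
    have h2 := Set.indicator_nonneg (mvn_nonneg2 (a := a) ht) (-r)
    have h3 := Set.indicator_nonneg (mvn_nonneg3 (a := a) ht) (t - r)
    linarith
  rcases lt_or_ge r 0 with hr0 | hr0
  · have hk := kernel_bound_mid (a := a) (s := s) (u := u) (r := r) (t := t)
      (by rw [ha_def]; linarith) hs0 hs_le hu_le (by linarith) hr0 hr1.le
    unfold mvnBound
    rw [Set.indicator_of_mem (show -r ∈ Ioc (0:ℝ) 1 by constructor <;> linarith)]
    have h1 := Set.indicator_nonneg (mvn_nonneg1 (a := a) (t := t)) (-r)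
    have h3 := Set.indicator_nonneg (mvn_nonneg3 (a := a) ht) (t - r)
    linarith
  · have hrt : r < t := by
      by_contra hcontra
      push_neg at hcontra
      have hfl : (⌊(N:ℝ)*t⌋:ℤ) ≤ ⌊(N:ℝ)*r⌋ := Int.floor_le_floor (by nlinarith)
      have : s ≤ u := by
        rw [hs_def, hu_def, div_le_div_iff₀ hNpos hNpos]
        have : ((⌊(N:ℝ)*t⌋:ℝ)) ≤ ((⌊(N:ℝ)*r⌋:ℝ)) := by exact_mod_cast hfl
        nlinarith
      linarith [hcond]
    have hu0 : 0 ≤ u := by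
      apply div_nonneg _ hNpos.le
      exact_mod_cast Int.floor_nonneg.2 (by positivity)
    have hfloor_lt : (⌊(N:ℝ)*r⌋:ℤ) < ⌊(N:ℝ)*t⌋ := by
      by_contra hcontra
      push_neg at hcontra
      have hfl : ((⌊(N:ℝ)*t⌋:ℝ)) ≤ ((⌊(N:ℝ)*r⌋:ℝ)) := by exact_mod_cast hcontra
      have : s ≤ u := by
        rw [hs_def, hu_def, div_le_div_iff₀ hNpos hNpos]
        nlinarith
      linarith [hcond]
    have hstep : u + 1/N ≤ s := by
      rw [hu_def, hs_def, ← add_div, div_le_div_iff₀ hNpos hNpos]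
      have : ((⌊(N:ℝ)*r⌋:ℝ)) + 1 ≤ ((⌊(N:ℝ)*t⌋:ℝ)) := by exact_mod_cast hfloor_lt
      nlinarith
    have h3 : (t - r)/3 ≤ s - u := by linarith
    have hk := kernel_bound_pos (a := a) (s := s) (u := u) (r := r) (t := t)
      (sub_ne_zero_of_ne hH) hu0 hcond hs_le hrt h3
    unfold mvnBound
    rw [Set.indicator_of_mem (show t - r ∈ Ioc (0:ℝ) t by constructor <;> linarith)]
    have h1 := Set.indicator_nonneg (mvn_nonneg1 (a := a) (t := t)) (-r)
    have h2 := Set.indicator_nonneg (mvn_nonneg2 (a := a) ht) (-r)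
    linarith




lemma floor_div_le {x : ℝ} {N : ℕ} (hN : 1 ≤ N) : ((⌊(N:ℝ)*x⌋:ℝ))/N ≤ x := by
  have hNpos : (0:ℝ) < N := by exact_mod_cast hN
  rw [div_le_iff₀ hNpos, mul_comm]
  exact Int.floor_le _

lemma lt_floor_div {x : ℝ} {N : ℕ} (hN : 1 ≤ N) : x - 1/N < ((⌊(N:ℝ)*x⌋:ℝ))/N := by
  have hNpos : (0:ℝ) < N := by exact_mod_cast hN
  rw [lt_div_iff₀ hNpos]
  have := Int.lt_floor_add_one ((N:ℝ)*x)
  have hN1 : (1/(N:ℝ))*N = 1 := by field_simp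
  nlinarith

lemma floor_div_nonneg {x : ℝ} {N : ℕ} (hN : 1 ≤ N) (hx : 0 ≤ x) :
    0 ≤ ((⌊(N:ℝ)*x⌋:ℝ))/N := by
  have hNpos : (0:ℝ) < N := by exact_mod_cast hN
  exact div_nonneg (by exact_mod_cast Int.floor_nonneg.2 (by positivity)) hNpos.le

lemma tendsto_floor_div {x : ℝ} : Filter.Tendsto (fun N : ℕ => ((⌊(N:ℝ)*x⌋:ℝ))/N)
    Filter.atTop (nhds x) := by
  have h1N : Filter.Tendsto (fun N : ℕ => 1/(N:ℝ)) Filter.atTop (nhds 0) :=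
    tendsto_one_div_atTop_nhds_zero_nat
  apply tendsto_of_tendsto_of_tendsto_of_le_of_le' (g := fun N : ℕ => x - 1/(N:ℝ))
    (h := fun _ : ℕ => x)
  · simpa using tendsto_const_nhds.sub h1N
  · exact tendsto_const_nhds
  · exact Filter.eventually_atTop.2 ⟨1, fun N hN => (lt_floor_div hN).le⟩
  · exact Filter.eventually_atTop.2 ⟨1, fun N hN => floor_div_le hN⟩

end MvnAux

/-- For `0 < H < 1`, `t > 0`, `Δt = 1/N` and `t_N = ⌊Nt⌋·Δt`, the Riemann sums of the squared
Mandelbrot–Van Ness kernel over the grid converge to the corresponding integral: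
each sum `∑_{k ∈ ℤ, kΔt < t_N} ((t_N - kΔt)^(H-1/2) - ((-kΔt)₊)^(H-1/2))²·Δt` converges
absolutely, and as `N → ∞` it tends to
`∫_{-∞}^t ((t-r)^(H-1/2) - ((-r)₊)^(H-1/2))² dr`. -/
theorem riemann_sums_tendsto_mvn_integral (H : ℝ) (hH0 : 0 < H) (hH1 : H < 1)
    (t : ℝ) (ht : 0 < t) :
    let S : ℕ → ℤ → ℝ := fun N k =>
      let Δt : ℝ := 1 / N
      let tN : ℝ := ⌊(N : ℝ) * t⌋ * Δt
      if (k : ℝ) * Δt < tN then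
        ((tN - k * Δt) ^ (H - 1/2) - (max (-(k * Δt)) 0) ^ (H - 1/2)) ^ 2 * Δt
      else 0
    (∀ N : ℕ, 0 < N → Summable (S N)) ∧
    Filter.Tendsto (fun N : ℕ => ∑' k : ℤ, S N k) Filter.atTop
      (nhds (∫ r in Set.Iio t, ((t - r) ^ (H - 1/2) - (max (-r) 0) ^ (H - 1/2)) ^ 2)) := by
  intro S
  have hS : ∀ (N : ℕ) (k : ℤ), S N k =
      if (k : ℝ) * (1/(N:ℝ)) < (⌊(N:ℝ)*t⌋:ℝ) * (1/(N:ℝ)) then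
        (((⌊(N:ℝ)*t⌋:ℝ) * (1/(N:ℝ)) - (k:ℝ) * (1/(N:ℝ))) ^ (H - 1/2)
          - (max (-((k:ℝ) * (1/(N:ℝ)))) 0) ^ (H - 1/2)) ^ 2 * (1/(N:ℝ))
      else 0 := fun N k => rfl
  by_cases hH : H = 1/2
  · have h0 : H - 1/2 = 0 := by rw [hH]; ring
    have hzero : ∀ N, S N = fun _ => (0:ℝ) := by
      intro N; funext k; rw [hS]; simp only [h0, Real.rpow_zero, sub_self]; simp
    constructor
    · intro N _; rw [hzero N]; exact summable_zero
    · have h1 : (fun N : ℕ => ∑' k : ℤ, S N k) = fun _ => (0:ℝ) := by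
        funext N; rw [hzero N]; exact tsum_zero
      have h2 : ∫ r in Set.Iio t, ((t - r) ^ (H - 1/2) - (max (-r) 0) ^ (H - 1/2)) ^ 2 = 0 := by
        simp only [h0, Real.rpow_zero, sub_self]; simp
      rw [h1, h2]; exact tendsto_const_nhds
  -- Main case : H ≠ 1/2
  have ha0 : H - 1/2 ≠ 0 := sub_ne_zero_of_ne hH
  have ha1 : -1 < 2*(H - 1/2) := by linarith
  have ha2 : 2*(H - 1/2) - 2 < -1 := by linarith
  set g : ℕ → ℝ → ℝ := fun N r =>
    if ((⌊(N:ℝ)*r⌋:ℝ))/N < ((⌊(N:ℝ)*t⌋:ℝ))/N then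
      (((⌊(N:ℝ)*t⌋:ℝ)/N - (⌊(N:ℝ)*r⌋:ℝ)/N) ^ (H - 1/2)
        - (max (-((⌊(N:ℝ)*r⌋:ℝ)/N)) 0) ^ (H - 1/2)) ^ 2
    else 0 with hg_def
  have hg_meas : ∀ N, Measurable (g N) := by
    intro N
    have : g N = (fun k : ℤ => if ((k:ℝ))/N < ((⌊(N:ℝ)*t⌋:ℝ))/N then
        (((⌊(N:ℝ)*t⌋:ℝ)/N - (k:ℝ)/N) ^ (H - 1/2)
          - (max (-((k:ℝ)/N)) 0) ^ (H - 1/2)) ^ 2 else 0)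
        ∘ (fun r : ℝ => ⌊(N:ℝ)*r⌋) := rfl
    rw [this]
    exact (Measurable.of_discrete).comp
      (Int.measurable_floor.comp (measurable_const.mul measurable_id))
  have hg_nonneg : ∀ N r, 0 ≤ g N r := by
    intro N r
    rw [hg_def]
    dsimp only
    split_ifs
    · positivity
    · exact le_refl 0
  have hg_bound : ∀ (N : ℕ), 1 ≤ N → ∀ r, ‖g N r‖ ≤ mvnBound (H - 1/2) t r := by
    intro N hN r
    rw [Real.norm_eq_abs, abs_of_nonneg (hg_nonneg N r)]
    exact mvnG_le_bound hH0 hH1 hH ht hN r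
  have hg_int : ∀ (N : ℕ), 1 ≤ N → Integrable (g N) volume := fun N hN =>
    (mvnBound_integrable ha1 ha2 ht).mono' ((hg_meas N).aestronglyMeasurable)
      (Filter.Eventually.of_forall (hg_bound N hN))
  have hhasSum : ∀ (N : ℕ), 1 ≤ N → HasSum (S N) (∫ r : ℝ, g N r) := by
    intro N hN
    have hNpos : (0:ℝ) < N := by exact_mod_cast hN
    have hdisj : Pairwise (Function.onFun Disjoint fun k : ℤ => Ico ((k:ℝ)/N) (((k:ℝ)+1)/N)) := by
      have key : ∀ i j : ℤ, i < j →
          Disjoint (Ico ((i:ℝ)/N) (((i:ℝ)+1)/N)) (Ico ((j:ℝ)/N) (((j:ℝ)+1)/N)) := by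
        intro i j hij
        apply Set.Ico_disjoint_Ico.2
        have hij' : ((i:ℝ)+1) ≤ (j:ℝ) := by exact_mod_cast hij
        have h1 : ((i:ℝ)+1)/N ≤ (j:ℝ)/N := by gcongr
        calc min (((i:ℝ)+1)/N) (((j:ℝ)+1)/N) ≤ ((i:ℝ)+1)/N := min_le_left _ _
          _ ≤ (j:ℝ)/N := h1
          _ ≤ max ((i:ℝ)/N) ((j:ℝ)/N) := by
              rw [le_max_iff]; right; exact le_refl _
      intro i j hij
      rcases lt_or_gt_of_ne hij with h | h
      · exact key i j h
      · exact (key j i h).symm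
    have hcover : (⋃ k : ℤ, Ico ((k:ℝ)/N) (((k:ℝ)+1)/N)) = univ := by
      ext r
      simp only [mem_iUnion, mem_univ, iff_true, mem_Ico]
      refine ⟨⌊(N:ℝ)*r⌋, ?_, ?_⟩
      · exact floor_div_le hN
      · rw [lt_div_iff₀ hNpos]
        have := Int.lt_floor_add_one ((N:ℝ)*r)
        push_cast
        nlinarith
    have hfloor : ∀ k : ℤ, ∀ r ∈ Ico ((k:ℝ)/N) (((k:ℝ)+1)/N), ⌊(N:ℝ)*r⌋ = k := by
      intro k r hr
      apply Int.floor_eq_iff.2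
      constructor
      · have := (div_le_iff₀ hNpos).1 hr.1
        linarith [this]  -- (k:ℝ) ≤ r * N vs N * r
      · have := (lt_div_iff₀ hNpos).1 hr.2
        push_cast
        nlinarith
    have hpiece : ∀ k : ℤ, (∫ r in Ico ((k:ℝ)/N) (((k:ℝ)+1)/N), g N r) = S N k := by
      intro k
      have hconst : EqOn (g N) (fun _ => (N:ℝ) * S N k) (Ico ((k:ℝ)/N) (((k:ℝ)+1)/N)) := by
        intro r hr
        have hfl := hfloor k r hr
        rw [hg_def]
        dsimp only
        rw [hfl, hS]
        have hc : ((k:ℝ))/N < ((⌊(N:ℝ)*t⌋:ℝ))/N ↔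
            (k : ℝ) * (1/(N:ℝ)) < (⌊(N:ℝ)*t⌋:ℝ) * (1/(N:ℝ)) := by
          rw [mul_one_div, mul_one_div]
        split_ifs with h1 h2 h2
        · rw [mul_one_div, mul_one_div]
          field_simp
        · exact absurd (hc.1 h1) h2
        · exact absurd (hc.2 h2) h1
        · ring
      rw [setIntegral_congr_fun measurableSet_Ico hconst, setIntegral_const, Real.volume_real_Ico]
      have hlen : ((k:ℝ)+1)/N - (k:ℝ)/N = 1/N := by ring
      rw [hlen, max_eq_left (by positivity), smul_eq_mul]
      field_simp
    have hIntOn : IntegrableOn (g N) (⋃ k : ℤ, Ico ((k:ℝ)/N) (((k:ℝ)+1)/N)) volume := by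
      rw [hcover, integrableOn_univ]
      exact hg_int N hN
    have h := hasSum_integral_iUnion (fun k => measurableSet_Ico) hdisj hIntOn
    rw [hcover] at h
    rw [funext hpiece] at h
    rwa [setIntegral_univ] at h
  constructor
  · intro N hN
    exact (hhasSum N hN).summable
  · -- final convergence
    have hae : ∀ᵐ r : ℝ, r ∉ ({0, t} : Set ℝ) :=
      measure_eq_zero_iff_ae_notMem.1 ((Set.toFinite ({0, t} : Set ℝ)).measure_zero _)
    have hmain : Filter.Tendsto (fun N : ℕ => ∫ r : ℝ, g N r) Filter.atTop
        (nhds (∫ r : ℝ, (Iio t).indicator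
          (fun r => ((t - r) ^ (H - 1/2) - (max (-r) 0) ^ (H - 1/2)) ^ 2) r)) := by
      apply tendsto_integral_filter_of_dominated_convergence (bound := mvnBound (H - 1/2) t)
      · exact Filter.Eventually.of_forall fun N => (hg_meas N).aestronglyMeasurable
      · filter_upwards [Filter.eventually_ge_atTop 1] with N hN
        exact Filter.Eventually.of_forall (hg_bound N hN)
      · exact mvnBound_integrable ha1 ha2 ht
      · filter_upwards [hae] with r hr
        simp only [mem_insert_iff, mem_singleton_iff, not_or] at hr
        obtain ⟨hr0, hrt⟩ := hr
        have hu : Filter.Tendsto (fun N : ℕ => ((⌊(N:ℝ)*r⌋:ℝ))/N) Filter.atTop (nhds r) :=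
          tendsto_floor_div
        have hs : Filter.Tendsto (fun N : ℕ => ((⌊(N:ℝ)*t⌋:ℝ))/N) Filter.atTop (nhds t) :=
          tendsto_floor_div
        have h1N : Filter.Tendsto (fun N : ℕ => 1/(N:ℝ)) Filter.atTop (nhds 0) :=
          tendsto_one_div_atTop_nhds_zero_nat
        rcases lt_trichotomy r 0 with hrneg | hr0' | hrpos
        · -- r < 0
          have hflim : (Iio t).indicator
              (fun r => ((t - r) ^ (H - 1/2) - (max (-r) 0) ^ (H - 1/2)) ^ 2) r
              = ((t - r) ^ (H - 1/2) - (max (-r) 0) ^ (H - 1/2)) ^ 2 :=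
            Set.indicator_of_mem (by rw [mem_Iio]; linarith) _
          rw [hflim]
          have hEq : ∀ᶠ N in Filter.atTop, g N r =
              ((((⌊(N:ℝ)*t⌋:ℝ))/N - ((⌊(N:ℝ)*r⌋:ℝ))/N) ^ (H - 1/2)
                - (max (-(((⌊(N:ℝ)*r⌋:ℝ))/N)) 0) ^ (H - 1/2)) ^ 2 := by
            filter_upwards [Filter.eventually_ge_atTop 1] with N hN
            rw [hg_def]
            dsimp only
            rw [if_pos]
            calc ((⌊(N:ℝ)*r⌋:ℝ))/N ≤ r := floor_div_le hN
              _ < 0 := hrneg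
              _ ≤ ((⌊(N:ℝ)*t⌋:ℝ))/N := floor_div_nonneg hN ht.le
          apply Filter.Tendsto.congr' (hEq.mono fun N h => h.symm)
          have hsub : Filter.Tendsto
              (fun N : ℕ => ((⌊(N:ℝ)*t⌋:ℝ))/N - ((⌊(N:ℝ)*r⌋:ℝ))/N)
              Filter.atTop (nhds (t - r)) := hs.sub hu
          have hmax : Filter.Tendsto (fun N : ℕ => max (-(((⌊(N:ℝ)*r⌋:ℝ))/N)) 0)
              Filter.atTop (nhds (max (-r) 0)) := (hu.neg).max tendsto_const_nhds
          have hP1 := hsub.rpow_const (p := H - 1/2) (Or.inl (sub_ne_zero_of_ne fun h => hrt (by linarith)))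
          have hP2 := hmax.rpow_const (p := H - 1/2)
            (Or.inl ((lt_max_iff.mpr (Or.inl (by linarith : (0:ℝ) < -r))).ne'))
          exact (hP1.sub hP2).pow 2
        · exact absurd hr0' hr0
        · -- 0 < r
          rcases lt_or_gt_of_ne hrt with hrlt | hrgt
          · -- 0 < r < t
            have hflim : (Iio t).indicator
                (fun r => ((t - r) ^ (H - 1/2) - (max (-r) 0) ^ (H - 1/2)) ^ 2) r
                = ((t - r) ^ (H - 1/2) - (0:ℝ)) ^ 2 := by
              rw [Set.indicator_of_mem (by rw [mem_Iio]; linarith) ,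
                max_eq_right (by linarith : -r ≤ 0), Real.zero_rpow ha0]
            rw [hflim]
            have hEq : ∀ᶠ N in Filter.atTop, g N r =
                ((((⌊(N:ℝ)*t⌋:ℝ))/N - ((⌊(N:ℝ)*r⌋:ℝ))/N) ^ (H - 1/2) - (0:ℝ)) ^ 2 := by
              filter_upwards [Filter.eventually_ge_atTop 1,
                h1N.eventually_lt_const (by linarith : (0:ℝ) < t - r)] with N hN hNlt
              rw [hg_def]
              dsimp only
              rw [if_pos, max_eq_right, Real.zero_rpow ha0]
              · simp only [neg_nonpos]
                exact floor_div_nonneg hN hrpos.le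
              · calc ((⌊(N:ℝ)*r⌋:ℝ))/N ≤ r := floor_div_le hN
                  _ < t - 1/N := by linarith
                  _ < ((⌊(N:ℝ)*t⌋:ℝ))/N := lt_floor_div hN
            apply Filter.Tendsto.congr' (hEq.mono fun N h => h.symm)
            have hsub : Filter.Tendsto
                (fun N : ℕ => ((⌊(N:ℝ)*t⌋:ℝ))/N - ((⌊(N:ℝ)*r⌋:ℝ))/N)
                Filter.atTop (nhds (t - r)) := hs.sub hu
            have hP1 := hsub.rpow_const (p := H - 1/2)
              (Or.inl (sub_ne_zero_of_ne fun h => hrt (by linarith)))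
            exact (hP1.sub tendsto_const_nhds).pow 2
          · -- t < r
            have hflim : (Iio t).indicator
                (fun r => ((t - r) ^ (H - 1/2) - (max (-r) 0) ^ (H - 1/2)) ^ 2) r
                = 0 := Set.indicator_of_notMem (by rw [mem_Iio]; push_neg; linarith) _
            rw [hflim]
            have hEq : ∀ᶠ N in Filter.atTop, g N r = 0 := by
              filter_upwards [Filter.eventually_ge_atTop 1] with N hN
              have hNpos : (0:ℝ) < N := by exact_mod_cast hN
              rw [hg_def]
              dsimp only
              rw [if_neg]
              push_neg
              have hfl : (⌊(N:ℝ)*t⌋:ℤ) ≤ ⌊(N:ℝ)*r⌋ :=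
                Int.floor_le_floor (by nlinarith)
              have hfl' : ((⌊(N:ℝ)*t⌋:ℝ)) ≤ ((⌊(N:ℝ)*r⌋:ℝ)) := by exact_mod_cast hfl
              gcongr
            apply Filter.Tendsto.congr' (hEq.mono fun N h => h.symm)
            exact tendsto_const_nhds
    have hind : (∫ r : ℝ, (Iio t).indicator
        (fun r => ((t - r) ^ (H - 1/2) - (max (-r) 0) ^ (H - 1/2)) ^ 2) r)
        = ∫ r in Set.Iio t, ((t - r) ^ (H - 1/2) - (max (-r) 0) ^ (H - 1/2)) ^ 2 :=
      integral_indicator measurableSet_Iio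
    rw [hind] at hmain
    refine Filter.Tendsto.congr' ?_ hmain
    filter_upwards [Filter.eventually_ge_atTop 1] with N hN
    exact ((hhasSum N hN).tsum_eq).symm
end
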